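/- arXiv:2003.00622 — 7 statements merged into one kernel-verified Lean document; each statement's English description precedes it below -/
import Mathlib

section
/- Let G be an n-vertex graph with no path of length ℓ (ℓ edges). Then G has at most (ℓ−1)n/2 edges. -/
/-!
Induct on the number of non-isolated vertices. If some non-isolated vertex `v` has
`2 deg v < ℓ`, delete its edges: this removes at most `(ℓ - 1) / 2` edges and at least one
non-isolated vertex. Otherwise every non-isolated vertex has degree at least `ℓ / 2`, and we show
that every degree is below `ℓ`, which gives `2 |E| = ∑ deg ≤ (ℓ - 1) · #non-isolated`.

For that, take a longest path `x = v₀, …, v_k = y` in the component of `v`; then `k < ℓ` and all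
neighbours of `x` and `y` lie on the path. Since `deg x + deg y ≥ ℓ > k`, pigeonhole gives an `i`
with `x ~ v_{i+1}` and `y ~ v_i`, hence a cycle through exactly the vertices of the path. An edge
leaving that cycle would extend it to a path with `k + 1` edges, so the component of `v` is
`{v₀, …, v_k}` and `deg v ≤ k < ℓ`.
-/

open Finset

namespace SimpleGraph

variable {V : Type*} {G : SimpleGraph V}

def PathFree (G : SimpleGraph V) (ℓ : ℕ) : Prop :=
  ∀ (u v : V) (p : G.Walk u v), p.IsPath → p.length ≠ ℓ

lemma PathFree.anti {H : SimpleGraph V} {ℓ : ℕ} (hG : G.PathFree ℓ) (hHG : H ≤ G) :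
    H.PathFree ℓ :=
  fun u v p hp => by simpa using hG u v (p.mapLe hHG) (hp.mapLe hHG)

lemma PathFree.length_lt {ℓ : ℕ} (hG : G.PathFree ℓ) {u v : V} {p : G.Walk u v}
    (hp : p.IsPath) : p.length < ℓ := by
  by_contra! h
  exact hG _ _ _ (hp.take ℓ) (by simpa using h)

namespace Walk

variable {x y z : V}

lemma exists_adj_getVert_succ_and_adj_getVert [Fintype V] [DecidableRel G.Adj]
    (p : G.Walk x y) (hx : ∀ z, G.Adj x z → z ∈ p.support) (hy : ∀ z, G.Adj y z → z ∈ p.support)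
    (hdeg : p.length < G.degree x + G.degree y) :
    ∃ i < p.length, G.Adj x (p.getVert (i + 1)) ∧ G.Adj y (p.getVert i) := by
  classical
  set A := {i ∈ range p.length | G.Adj x (p.getVert (i + 1))}
  set B := {i ∈ range p.length | G.Adj y (p.getVert i)}
  have hA : G.degree x ≤ #A := by
    rw [← card_neighborFinset_eq_degree]
    refine (card_le_card fun z hz => ?_).trans (card_image_le (f := fun i => p.getVert (i + 1)))
    rw [mem_neighborFinset] at hz
    obtain ⟨n, rfl, hn⟩ := mem_support_iff_exists_getVert.mp (hx z hz)
    obtain ⟨i, rfl⟩ : ∃ i, n = i + 1 :=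
      Nat.exists_eq_add_one.mpr (Nat.pos_of_ne_zero (by rintro rfl; simp at hz))
    exact mem_image.mpr ⟨i, by simp [A, hz]; omega, rfl⟩
  have hB : G.degree y ≤ #B := by
    rw [← card_neighborFinset_eq_degree]
    refine (card_le_card fun z hz => ?_).trans (card_image_le (f := p.getVert))
    rw [mem_neighborFinset] at hz
    obtain ⟨n, rfl, hn⟩ := mem_support_iff_exists_getVert.mp (hy z hz)
    have : n ≠ p.length := by rintro rfl; simp at hz
    exact mem_image.mpr ⟨n, by simp [B, hz]; omega, rfl⟩
  obtain ⟨i, hi⟩ := inter_nonempty_of_card_lt_card_add_card (t := A) (u := B)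
    (filter_subset _ _) (filter_subset _ _) (by rw [card_range]; omega)
  simp only [A, B, mem_inter, mem_filter, mem_range] at hi
  exact ⟨i, hi.1.1, hi.1.2, hi.2.2⟩

lemma IsPath.exists_isPath_support_perm [DecidableEq V] {p : G.Walk x y} (hp : p.IsPath) {i : ℕ}
    (hi : i < p.length) (hx : G.Adj x (p.getVert (i + 1))) (hy : G.Adj y (p.getVert i))
    (hz : z ∈ p.support) : ∃ w, ∃ q : G.Walk w z, q.IsPath ∧ q.support.Perm p.support := by
  -- the cycle `x, v_{i+1}, …, y, v_i, …, v_1, x`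
  let c : G.Walk x x := cons hx ((p.drop (i + 1)).append (cons hy (p.take i).reverse))
  have hc : c.support.tail.Perm p.support := by
    have : min (i + 1) p.length = i + 1 := by omega
    simp only [c, support_cons, List.tail_cons, support_append, support_reverse, support_take,
      drop_support_eq_support_drop_min, this]
    exact (List.perm_append_comm.trans ((List.reverse_perm _).append_right _)).trans
      (List.Perm.of_eq (List.take_append_drop _ _))
  have hzc : z ∈ c.support := List.mem_of_mem_tail (hc.mem_iff.mpr hz)
  have hrot : (c.rotate z hzc).support.tail.Perm p.support := (support_rotate c z hzc).perm.trans hc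
  obtain ⟨w, h, q, hq⟩ : ∃ w, ∃ (h : G.Adj z w), ∃ q, c.rotate z hzc = cons h q := by
    refine not_nil_iff.mp fun hnil => ?_
    rw [nil_iff_support_eq.mp hnil] at hrot
    exact p.support_ne_nil (List.Perm.nil_eq hrot).symm
  rw [hq, support_cons, List.tail_cons] at hrot
  exact ⟨w, q, (isPath_def q).mpr (hrot.nodup_iff.mpr hp.support_nodup), hrot⟩

def IsLongestPathInComponent (p : G.Walk x y) : Prop :=
  p.IsPath ∧ ∀ a b (q : G.Walk a b), q.IsPath → G.Reachable x a → q.length ≤ p.length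

namespace IsLongestPathInComponent

variable {p : G.Walk x y}

lemma adj_start_mem_support (hp : p.IsLongestPathInComponent) (h : G.Adj x z) :
    z ∈ p.support := by
  by_contra hz
  have := hp.2 z y (cons h.symm p) (hp.1.cons hz) h.reachable
  simp at this

lemma adj_end_mem_support (hp : p.IsLongestPathInComponent) (h : G.Adj y z) :
    z ∈ p.support := by
  by_contra hz
  have := hp.2 x z (p.concat h) (hp.1.concat hz h) (.refl x)
  simp at this

lemma mem_support_of_reachable [Fintype V] [DecidableRel G.Adj]
    (hp : p.IsLongestPathInComponent) (hdeg : p.length < G.degree x + G.degree y)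
    (hz : G.Reachable x z) : z ∈ p.support := by
  classical
  by_contra hzp
  obtain ⟨W⟩ := hz
  obtain ⟨d, -, hd, hd'⟩ := W.exists_boundary_dart {w | w ∈ p.support} p.start_mem_support hzp
  obtain ⟨i, hi, hxi, hyi⟩ := p.exists_adj_getVert_succ_and_adj_getVert
    (fun _ => hp.adj_start_mem_support) (fun _ => hp.adj_end_mem_support) hdeg
  obtain ⟨w, q, hq, hqp⟩ := hp.1.exists_isPath_support_perm hi hxi hyi hd
  have hw : G.Reachable x w := ⟨p.takeUntil w (hqp.mem_iff.mp q.start_mem_support)⟩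
  have := hp.2 w _ (q.concat d.adj) (hq.concat (fun h => hd' (hqp.mem_iff.mp h)) d.adj) hw
  have hlen := hqp.length_eq
  rw [length_support, length_support] at hlen
  rw [length_concat] at this
  omega

end IsLongestPathInComponent

end Walk

open Walk

lemma exists_isLongestPathInComponent [Finite V] (v : V) :
    ∃ x y, ∃ p : G.Walk x y, G.Reachable v x ∧ p.IsLongestPathInComponent := by
  have := Fintype.ofFinite V
  let S := {n | ∃ a b, ∃ q : G.Walk a b, q.IsPath ∧ G.Reachable v a ∧ q.length = n}
  have hS : BddAbove S :=
    ⟨Fintype.card V, by rintro _ ⟨a, b, q, hq, -, rfl⟩; exact hq.length_lt.le⟩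
  obtain ⟨x, y, p, hp, hvx, hlen⟩ := Nat.sSup_mem (s := S) ⟨0, v, v, nil, by simp, .refl v, rfl⟩ hS
  exact ⟨x, y, p, hvx, hp, fun a b q hq hxa =>
    hlen ▸ le_csSup hS ⟨a, b, q, hq, hvx.trans hxa, rfl⟩⟩

lemma PathFree.degree_lt [Fintype V] [DecidableRel G.Adj] {ℓ : ℕ} (hG : G.PathFree ℓ)
    (hdeg : ∀ w, G.degree w ≠ 0 → ℓ ≤ 2 * G.degree w) {v : V} (hv : G.degree v ≠ 0) :
    G.degree v < ℓ := by
  classical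
  obtain ⟨x, y, p, hvx, hp⟩ := exists_isLongestPathInComponent (G := G) v
  obtain ⟨z, hvz⟩ := (G.degree_pos_iff_exists_adj v).mp (Nat.pos_of_ne_zero hv)
  have hnil : ¬p.Nil := not_nil_iff_lt_length.mpr <| Nat.lt_of_succ_le <| by
    simpa using hp.2 v z hvz.toWalk hvz.isPath_toWalk hvx.symm
  have hx := hdeg x ((G.degree_pos_iff_exists_adj x).mpr ⟨_, p.adj_snd hnil⟩).ne'
  have hy := hdeg y ((G.degree_pos_iff_exists_adj y).mpr ⟨_, (p.adj_penultimate hnil).symm⟩).ne'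
  have hlen := hG.length_lt hp.1
  have hsupp : ∀ w, G.Reachable v w → w ∈ p.support := fun w hw =>
    hp.mem_support_of_reachable (by omega) (hvx.symm.trans hw)
  calc G.degree v = #(G.neighborFinset v) := (card_neighborFinset_eq_degree G v).symm
    _ ≤ #(p.support.toFinset.erase v) := card_le_card fun w hw => by
      rw [mem_neighborFinset] at hw
      simpa [hw.ne'] using hsupp w hw.reachable
    _ = #p.support.toFinset - 1 := card_erase_of_mem (by simpa using hsupp v (.refl v))
    _ ≤ p.length := by have := p.support.toFinset_card_le; simp at this; omega
    _ < ℓ := hlen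

lemma two_mul_ncard_edgeSet_le_mul_ncard_support [Fintype V] [DecidableRel G.Adj] {d : ℕ}
    (h : ∀ v ∈ G.support, G.degree v ≤ d) : 2 * G.edgeSet.ncard ≤ d * G.support.ncard := by
  classical
  rw [← coe_edgeFinset, Set.ncard_coe_finset, ← sum_degrees_eq_twice_card_edges,
    Set.ncard_eq_toFinset_card', mul_comm]
  calc ∑ v, G.degree v = ∑ v ∈ G.support.toFinset, G.degree v := by
        refine (sum_subset (subset_univ _) fun v _ hv => ?_).symm
        simpa [← degree_pos_iff_mem_support] using hv
    _ ≤ _ := sum_le_card_nsmul _ _ _ fun v hv => h v (by simpa using hv)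

lemma ncard_edgeSet_deleteIncidenceSet_add_degree [Fintype V] [DecidableRel G.Adj] (v : V) :
    (G.deleteIncidenceSet v).edgeSet.ncard + G.degree v = G.edgeSet.ncard := by
  classical
  rw [edgeSet_deleteIncidenceSet, ← card_incidenceSet_eq_degree, ← Nat.card_eq_fintype_card,
    Nat.card_coe_set_eq, Set.ncard_sdiff_add_ncard_of_subset (G.incidenceSet_subset v)]

lemma ncard_support_deleteIncidenceSet_lt [Finite V] {v : V} (hv : v ∈ G.support) :
    (G.deleteIncidenceSet v).support.ncard < G.support.ncard :=
  (Set.ncard_le_ncard (support_deleteIncidenceSet_subset G v)).trans_lt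
    (Set.ncard_sdiff_singleton_lt_of_mem hv)

theorem PathFree.two_mul_ncard_edgeSet_le [Finite V] {ℓ : ℕ} (hG : G.PathFree ℓ) :
    2 * G.edgeSet.ncard ≤ (ℓ - 1) * G.support.ncard := by
  classical
  have := Fintype.ofFinite V
  induction hs : G.support.ncard using Nat.strong_induction_on generalizing G with
  | _ s ih =>
  by_cases hlow : ∃ v, G.degree v ≠ 0 ∧ 2 * G.degree v < ℓ
  · obtain ⟨v, hv, hvℓ⟩ := hlow
    have hsupp := hs ▸ ncard_support_deleteIncidenceSet_lt
      ((G.degree_pos_iff_mem_support v).mp (Nat.pos_of_ne_zero hv))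
    have hdel := ih _ hsupp (hG.anti (G.deleteIncidenceSet_le v)) rfl
    calc 2 * G.edgeSet.ncard
        = 2 * (G.deleteIncidenceSet v).edgeSet.ncard + 2 * G.degree v := by
          rw [← ncard_edgeSet_deleteIncidenceSet_add_degree v]; ring
      _ ≤ (ℓ - 1) * (G.deleteIncidenceSet v).support.ncard + (ℓ - 1) :=
          add_le_add hdel (by omega)
      _ ≤ (ℓ - 1) * s := by rw [← mul_add_one]; exact Nat.mul_le_mul_left _ hsupp
  · push Not at hlow
    exact hs ▸ two_mul_ncard_edgeSet_le_mul_ncard_support fun v hv =>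
      Nat.le_sub_one_of_lt (hG.degree_lt hlow ((G.degree_pos_iff_mem_support v).mpr hv).ne')

end SimpleGraph

theorem stmt_5_general {V : Type*} [Fintype V] (ℓ : ℕ) (G : SimpleGraph V)
    (hfree : ∀ (u v : V) (p : G.Walk u v), p.IsPath → p.length ≠ ℓ) :
    2 * G.edgeSet.ncard ≤ (ℓ - 1) * Fintype.card V :=
  (SimpleGraph.PathFree.two_mul_ncard_edgeSet_le hfree).trans <|
    Nat.mul_le_mul_left _ ((Set.ncard_le_card _).trans_eq Nat.card_eq_fintype_card)

/-- Erdős–Gallai: a graph on `n` vertices with no path of `ℓ` edges has at most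
`(ℓ-1)n/2` edges. -/
theorem stmt_5 {V : Type*} [Fintype V] (ℓ : ℕ) (hℓ : 0 < ℓ) (G : SimpleGraph V)
    (hfree : ∀ (u v : V) (p : G.Walk u v), p.IsPath → p.length ≠ ℓ) :
    2 * G.edgeSet.ncard ≤ (ℓ - 1) * Fintype.card V :=
  stmt_5_general ℓ G hfree
end

section
/- Let T be an r-uniform tight tree with ℓ edges, and let G be an r-uniform hypergraph on [n] containing no copy of T. Then |G| ≤ (ℓ−1)·|∂G|, where ∂G is the family of (r−1)-sets contained in some edge of G. In particular, |G| ≤ (ℓ−1)·C(n, r−1). -/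
/-- `G` contains a copy of `F`. -/
def HasCopy {α β : Type*} [DecidableEq α] [DecidableEq β]
    (F : Finset (Finset α)) (G : Finset (Finset β)) : Prop :=
  ∃ f : α → β, Set.InjOn f ↑(F.sup id) ∧ ∀ e ∈ F, e.image f ∈ G

/-!
If `|G| > (ℓ - 1)|∂G|`, repeatedly delete all edges through an `(r-1)`-set of codegree less
than `ℓ`: each deletion removes at most `ℓ - 1` edges and at least one shadow set, so the
process stops at a nonempty subfamily in which every shadow set has codegree at least `ℓ`.
There `T` embeds greedily edge by edge: the new edge `e i` meets the embedded part in an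
`(r-1)`-set whose image lies in the shadow, and among its at least `ℓ` extensions to an edge,
at most `|U| - (r - 1) < ℓ` use a vertex already occupied by the embedded union `U`.
-/

open Finset

theorem exists_injOn_image_eq {α β : Type*} [DecidableEq β] [Nonempty β] {s : Finset α}
    {t : Finset β} (h : #s = #t) :
    ∃ f : α → β, Set.InjOn f s ∧ s.image f = t := by
  obtain ⟨f, hf⟩ := s.finite_toSet.exists_bijOn_of_encard_eq (t := (t : Set β))
    (by simp [Set.encard_coe_eq_coe_finsetCard, h])
  exact ⟨f, hf.injOn, coe_injective (by rw [coe_image, hf.image_eq])⟩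

section Hypergraph

variable {α β : Type*} [DecidableEq α] [DecidableEq β]

/-- For an `r`-uniform `G`, `levelShadow (r - 1) G` is the shadow `∂G`. -/
def levelShadow (k : ℕ) (G : Finset (Finset β)) : Finset (Finset β) :=
  G.sup (·.powersetCard k)

def codegree (G : Finset (Finset β)) (t : Finset β) : ℕ :=
  #{A ∈ G | t ⊆ A}

theorem mem_levelShadow {k : ℕ} {G : Finset (Finset β)} {t : Finset β} :
    t ∈ levelShadow k G ↔ ∃ A ∈ G, t ⊆ A ∧ t.card = k := by
  simp [levelShadow, mem_sup, mem_powersetCard]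

theorem levelShadow_subset_powersetCard {k : ℕ} {G : Finset (Finset β)} {X : Finset β}
    (hG : ∀ A ∈ G, A ⊆ X) : levelShadow k G ⊆ X.powersetCard k := by
  intro t ht
  obtain ⟨A, hA, htA, htk⟩ := mem_levelShadow.1 ht
  exact mem_powersetCard.2 ⟨htA.trans (hG A hA), htk⟩

theorem HasCopy.mono {F : Finset (Finset α)} {G G' : Finset (Finset β)} (h : HasCopy F G')
    (hG' : G' ⊆ G) : HasCopy F G := by
  obtain ⟨f, hf, hF⟩ := h
  exact ⟨f, hf, fun e he => hG' (hF e he)⟩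

theorem levelShadow_filter_not_subset {k : ℕ} (G : Finset (Finset β)) (t : Finset β) :
    levelShadow k {A ∈ G | ¬t ⊆ A} ⊆ (levelShadow k G).erase t := by
  intro s hs
  obtain ⟨A, hA, hsA, hsk⟩ := mem_levelShadow.1 hs
  rw [mem_filter] at hA
  refine mem_erase.2 ⟨?_, mem_levelShadow.2 ⟨A, hA.1, hsA, hsk⟩⟩
  rintro rfl
  exact hA.2 hsA

theorem exists_nonempty_subset_le_codegree {k ℓ : ℕ} {G : Finset (Finset β)}
    (h : (ℓ - 1) * #(levelShadow k G) < #G) :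
    ∃ G' ⊆ G, G'.Nonempty ∧ ∀ t ∈ levelShadow k G', ℓ ≤ codegree G' t := by
  induction G using Finset.strongInduction with
  | H G ih =>
    by_cases hlow : ∃ t ∈ levelShadow k G, codegree G t < ℓ
    swap
    · exact ⟨G, Subset.rfl, card_pos.1 (by omega), by simpa using hlow⟩
    obtain ⟨t, ht, hlow⟩ := hlow
    obtain ⟨A, hA, htA, -⟩ := mem_levelShadow.1 ht
    have hsplit : codegree G t + #{A ∈ G | ¬t ⊆ A} = #G := card_filter_add_card_filter_not _
    have hshadow : #(levelShadow k {A ∈ G | ¬t ⊆ A}) + 1 ≤ #(levelShadow k G) := by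
      have := card_le_card (levelShadow_filter_not_subset (k := k) G t)
      rw [card_erase_of_mem ht] at this
      have := card_pos.2 ⟨t, ht⟩
      omega
    have hG'' : (ℓ - 1) * #(levelShadow k {A ∈ G | ¬t ⊆ A}) < #{A ∈ G | ¬t ⊆ A} := by
      have := Nat.mul_le_mul_left (ℓ - 1) hshadow
      rw [mul_add, mul_one] at this
      omega
    have hssub : {A ∈ G | ¬t ⊆ A} ⊂ G :=
      ⟨filter_subset _ _, fun hsub => (mem_filter.1 (hsub hA)).2 htA⟩
    obtain ⟨G', hG'G, hne, hcodeg⟩ := ih _ hssub hG''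
    exact ⟨G', hG'G.trans hssub.subset, hne, hcodeg⟩

theorem card_le_choose_of_forall_between {𝒜 : Finset (Finset α)} {s W : Finset α} {k : ℕ}
    (h : ∀ A ∈ 𝒜, s ⊆ A ∧ A ⊆ W ∧ #A = #s + k) : #𝒜 ≤ (#(W \ s)).choose k := by
  rw [← card_powersetCard]
  refine card_le_card_of_injOn (· \ s) (fun A hA => ?_) (fun A hA B hB hAB => ?_)
  · obtain ⟨hsA, hAW, hcard⟩ := h A hA
    refine mem_powersetCard.2 ⟨sdiff_subset_sdiff hAW Subset.rfl, ?_⟩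
    rw [card_sdiff_of_subset hsA]
    omega
  · rw [← sdiff_union_of_subset (h A hA).1, ← sdiff_union_of_subset (h B hB).1]
    exact congrArg (· ∪ s) hAB

theorem exists_insert_mem_of_le_codegree {G : Finset (Finset β)} {t W : Finset β} {ℓ : ℕ}
    (hG : ∀ A ∈ G, #A = #t + 1) (htW : t ⊆ W) (hW : #W < ℓ + #t)
    (h : ℓ ≤ codegree G t) :
    ∃ v ∉ W, insert v t ∈ G := by
  have hinside : #{A ∈ G | t ⊆ A ∧ A ⊆ W} < codegree G t := by
    have := card_le_choose_of_forall_between (k := 1) (𝒜 := {A ∈ G | t ⊆ A ∧ A ⊆ W})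
      (fun A hA => by
        rw [mem_filter] at hA
        exact ⟨hA.2.1, hA.2.2, hG A hA.1⟩)
    rw [Nat.choose_one_right, card_sdiff_of_subset htW] at this
    have := card_le_card htW
    omega
  obtain ⟨A, hA, hAW⟩ : ∃ A ∈ G, t ⊆ A ∧ ¬A ⊆ W := by
    by_contra! hcon
    refine hinside.not_ge (card_le_card fun A hA => ?_)
    rw [mem_filter] at hA ⊢
    exact ⟨hA.1, hA.2, hcon A hA.1 hA.2⟩
  obtain ⟨v, hvA, hvW⟩ := not_subset.1 hAW.2
  have hvt : v ∉ t := fun hvt => hvW (htW hvt)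
  refine ⟨v, hvW, ?_⟩
  convert hA
  refine eq_of_subset_of_card_le (insert_subset hvA hAW.1) ?_
  rw [card_insert_of_notMem hvt, hG A hA]

theorem exists_extend_injOn {f : α → β} {U e : Finset α} {G : Finset (Finset β)} {ℓ : ℕ}
    (hf : Set.InjOn f U) (he : #(e ∩ U) + 1 = #e) (hG : ∀ A ∈ G, #A = #e)
    (hU : #U < ℓ + #(e ∩ U)) (hcodeg : ℓ ≤ codegree G ((e ∩ U).image f)) :
    ∃ g : α → β, Set.EqOn g f U ∧ Set.InjOn g ↑(U ∪ e) ∧ e.image g ∈ G := by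
  have hs : #((e ∩ U).image f) = #(e ∩ U) :=
    card_image_of_injOn (hf.mono (by simp))
  obtain ⟨v, hvW, hv⟩ := exists_insert_mem_of_le_codegree (W := U.image f)
    (fun A hA => by rw [hG A hA, hs, he]) (image_subset_image inter_subset_right)
    (by rw [hs, card_image_of_injOn hf]; exact hU) hcodeg
  obtain ⟨w, hw⟩ : ∃ w, e \ U = {w} := by
    have := card_sdiff_add_card_inter e U
    exact card_eq_one.1 (by omega)
  have hwU : w ∉ U := (mem_sdiff.1 (hw ▸ mem_singleton_self w)).2
  have he_eq : e = insert w (e ∩ U) := by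
    rw [insert_eq, ← hw, sdiff_union_inter]
  have heqOn : Set.EqOn (Function.update f w v) f U := fun x hx =>
    Function.update_of_ne (ne_of_mem_of_not_mem hx hwU) _ _
  refine ⟨Function.update f w v, heqOn, ?_, ?_⟩
  · rw [he_eq, union_insert, union_eq_left.2 inter_subset_right, coe_insert,
      Set.injOn_insert (by simpa using hwU), Function.update_self, Set.image_congr heqOn]
    refine ⟨hf.congr heqOn.symm, ?_⟩
    simpa using hvW
  · rw [he_eq, image_insert, Function.update_self,
      image_congr (heqOn.mono (by simp : (↑(e ∩ U) : Set α) ⊆ U))]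
    exact hv

end Hypergraph

section TightTree

variable {α β : Type*} [DecidableEq α] [DecidableEq β] {ℓ : ℕ}

def prefixUnion (e : Fin ℓ → Finset α) (m : ℕ) : Finset α :=
  (univ.filter fun j : Fin ℓ => j.val < m).sup e

theorem prefixUnion_zero (e : Fin ℓ → Finset α) : prefixUnion e 0 = ∅ := by
  simp [prefixUnion]

theorem subset_prefixUnion (e : Fin ℓ → Finset α) {j : Fin ℓ} {m : ℕ} (hj : j.val < m) :
    e j ⊆ prefixUnion e m :=
  le_sup (f := e) (mem_filter.2 ⟨mem_univ j, hj⟩)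

theorem prefixUnion_succ (e : Fin ℓ → Finset α) (i : Fin ℓ) :
    prefixUnion e (i + 1) = prefixUnion e i ∪ e i := by
  have : (univ.filter fun j : Fin ℓ => j.val < i + 1) =
      insert i (univ.filter fun j : Fin ℓ => j.val < i) := by
    ext j
    simp only [mem_filter, mem_univ, true_and, mem_insert, Fin.ext_iff]
    omega
  rw [prefixUnion, this, sup_insert, union_comm]
  rfl

theorem prefixUnion_self (e : Fin ℓ → Finset α) : prefixUnion e ℓ = univ.sup e := by
  simp [prefixUnion]

def IsTightOrder (r : ℕ) (e : Fin ℓ → Finset α) : Prop :=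
  ∀ i : Fin ℓ, 0 < i.val → ∃ i' < i,
    #(e i ∩ prefixUnion e i) = r - 1 ∧ e i ∩ prefixUnion e i ⊆ e i'

variable {r : ℕ} {e : Fin ℓ → Finset α}

theorem IsTightOrder.card_prefixUnion_add_one_le (he : IsTightOrder r e) (hr : 0 < r)
    (hunif : ∀ i, #(e i) = r) {m : ℕ} (hm : m ≤ ℓ) : #(prefixUnion e m) + 1 ≤ r + m := by
  induction m with
  | zero => rw [prefixUnion_zero, card_empty]; omega
  | succ m ih =>
    have hsucc : prefixUnion e (m + 1) = prefixUnion e m ∪ e ⟨m, hm⟩ :=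
      prefixUnion_succ e ⟨m, hm⟩
    rcases Nat.eq_zero_or_pos m with rfl | hm0
    · simp [hsucc, prefixUnion_zero, hunif]
    · obtain ⟨-, -, hcard, -⟩ := he ⟨m, hm⟩ hm0
      have := card_union_add_card_inter (prefixUnion e m) (e ⟨m, hm⟩)
      rw [inter_comm, hcard, hunif] at this
      rw [hsucc]
      have := ih (by omega)
      omega

theorem IsTightOrder.exists_embedding_prefix (he : IsTightOrder r e) (hr : 0 < r)
    (hunif : ∀ i, #(e i) = r) {G : Finset (Finset β)} (hG : ∀ A ∈ G, #A = r)
    (hne : G.Nonempty) (hcodeg : ∀ t ∈ levelShadow (r - 1) G, ℓ ≤ codegree G t)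
    {m : ℕ} (hm : m ≤ ℓ) :
    ∃ f : α → β, Set.InjOn f ↑(prefixUnion e m) ∧
      ∀ j : Fin ℓ, j.val < m → (e j).image f ∈ G := by
  obtain ⟨A, hA⟩ := hne
  obtain ⟨b, -⟩ := card_pos.1 ((hG A hA).symm ▸ hr)
  induction m with
  | zero => exact ⟨fun _ => b, by simp [prefixUnion_zero], fun j hj => absurd hj (by omega)⟩
  | succ m ih =>
    obtain ⟨f, hf, hfG⟩ := ih (by omega)
    obtain ⟨i, hi⟩ : ∃ i : Fin ℓ, i.val = m := ⟨⟨m, hm⟩, rfl⟩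
    have hsucc : prefixUnion e (m + 1) = prefixUnion e m ∪ e i := hi ▸ prefixUnion_succ e i
    have hlt : ∀ j : Fin ℓ, j.val < m + 1 → j.val < m ∨ j = i := fun j hj => by
      rw [Fin.ext_iff]; omega
    rcases Nat.eq_zero_or_pos m with rfl | hm0
    · have : Nonempty β := ⟨b⟩
      obtain ⟨g, hg, hgA⟩ := exists_injOn_image_eq ((hunif i).trans (hG A hA).symm)
      refine ⟨g, by simpa [hsucc, prefixUnion_zero] using hg, fun j hj => ?_⟩
      obtain hj | rfl := hlt j hj
      · omega
      · rwa [hgA]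
    obtain ⟨i', hi', hcard, hsub⟩ := he i (by omega)
    rw [hi] at hcard hsub
    have hshadow : (e i ∩ prefixUnion e m).image f ∈ levelShadow (r - 1) G := by
      refine mem_levelShadow.2 ⟨(e i').image f, hfG i' (by rw [Fin.lt_def] at hi'; omega),
        image_subset_image hsub, ?_⟩
      rw [card_image_of_injOn (hf.mono (by simp)), ← hcard]
    have := he.card_prefixUnion_add_one_le hr hunif (m := m) (by omega)
    obtain ⟨g, hgf, hg, hgG⟩ := exists_extend_injOn hf (by rw [hcard, hunif]; omega)
      (fun A hA => by rw [hG A hA, hunif]) (by rw [hcard]; omega) (hcodeg _ hshadow)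
    refine ⟨g, by rwa [hsucc], fun j hj => ?_⟩
    obtain hj | rfl := hlt j hj
    · rw [image_congr (hgf.mono (by simpa using subset_prefixUnion e hj))]
      exact hfG j hj
    · exact hgG

theorem IsTightOrder.hasCopy_of_le_codegree (he : IsTightOrder r e) (hr : 0 < r)
    (hunif : ∀ i, #(e i) = r) {G : Finset (Finset β)} (hG : ∀ A ∈ G, #A = r)
    (hne : G.Nonempty) (hcodeg : ∀ t ∈ levelShadow (r - 1) G, ℓ ≤ codegree G t) :
    HasCopy (univ.image e) G := by
  obtain ⟨f, hf, hfG⟩ := he.exists_embedding_prefix hr hunif hG hne hcodeg le_rfl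
  refine ⟨f, by rwa [sup_image, Function.id_comp, ← prefixUnion_self], ?_⟩
  simp only [mem_image, mem_univ, true_and, forall_exists_index, forall_apply_eq_imp_iff]
  exact fun j => hfG j j.isLt

end TightTree

theorem stmt_8_general {α : Type*} [DecidableEq α] (r ℓ n : ℕ) (hr : 0 < r)
    (e : Fin ℓ → Finset α)
    (hunif : ∀ i, (e i).card = r)
    (htight : ∀ i : Fin ℓ, 0 < i.val → ∃ i' : Fin ℓ, i' < i ∧
      (e i ∩ (Finset.univ.filter (fun j => j < i)).sup e).card = r - 1 ∧
      e i ∩ (Finset.univ.filter (fun j => j < i)).sup e ⊆ e i')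
    (G : Finset (Finset ℕ)) (hG : G ⊆ (Finset.range n).powersetCard r)
    (hfree : ¬ HasCopy (Finset.image e Finset.univ) G) :
    G.card ≤ (ℓ - 1) * (G.sup (fun f => f.powersetCard (r - 1))).card ∧
      G.card ≤ (ℓ - 1) * Nat.choose n (r - 1) := by
  have htree : IsTightOrder r e := htight
  have hshadow : #G ≤ (ℓ - 1) * #(levelShadow (r - 1) G) := by
    by_contra! hlarge
    obtain ⟨G', hG'G, hne, hcodeg⟩ := exists_nonempty_subset_le_codegree hlarge
    have hunifG' : ∀ A ∈ G', #A = r := fun A hA => (mem_powersetCard.1 (hG (hG'G hA))).2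
    exact hfree ((htree.hasCopy_of_le_codegree hr hunif hunifG' hne hcodeg).mono hG'G)
  refine ⟨hshadow, hshadow.trans (Nat.mul_le_mul_left _ ?_)⟩
  have := card_le_card (levelShadow_subset_powersetCard (k := r - 1)
    fun A hA => (mem_powersetCard.1 (hG hA)).1)
  rwa [card_powersetCard, card_range] at this

/-- An `r`-uniform tight tree `T` with edges `e 0, …, e (ℓ-1)`: for each `i > 0`,
the intersection of `e i` with the union of earlier edges is an `(r-1)`-set
contained in some earlier edge. If `G ⊆ C([n],r)` contains no copy of `T`, then
`|G| ≤ (ℓ-1)|∂G|` and in particular `|G| ≤ (ℓ-1)·C(n,r-1)`. -/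
theorem stmt_8 {α : Type*} [DecidableEq α] (r ℓ n : ℕ) (hr : 0 < r) (hℓ : 0 < ℓ)
    (e : Fin ℓ → Finset α) (hinj : Function.Injective e)
    (hunif : ∀ i, (e i).card = r)
    (htight : ∀ i : Fin ℓ, 0 < i.val → ∃ i' : Fin ℓ, i' < i ∧
      (e i ∩ (Finset.univ.filter (fun j => j < i)).sup e).card = r - 1 ∧
      e i ∩ (Finset.univ.filter (fun j => j < i)).sup e ⊆ e i')
    (G : Finset (Finset ℕ)) (hG : G ⊆ (Finset.range n).powersetCard r)
    (hfree : ¬ HasCopy (Finset.image e Finset.univ) G) :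
    G.card ≤ (ℓ - 1) * (G.sup (fun f => f.powersetCard (r - 1))).card ∧
      G.card ≤ (ℓ - 1) * Nat.choose n (r - 1) :=
  stmt_8_general r ℓ n hr e hunif htight G hG hfree
end

section
/- Let s, t be positive integers and T a tree with bipartition classes of sizes s and t. If H_0 is a bipartite graph with parts A, B and more than (t−1)|A| + (s−1)|B| edges, then H_0 contains a copy of T with the s-class embedded in A and the t-class embedded in B. -/
/-!
Deleting all edges at an `A`-vertex of degree less than `t` (or at a `B`-vertex of degree less
than `s`) removes one vertex and at most `t - 1` (resp. `s - 1`) edges, so it preserves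
`(t - 1)|A| + (s - 1)|B| < |E|`. Repeating this ends in a nonempty subgraph in which every
`A`-vertex has degree at least `t` and every `B`-vertex degree at least `s`. A tree embeds into
such a graph leaf by leaf: the image of the neighbour of a new leaf from the `s`-class has at
least `s` neighbours, of which at most `s - 1` are already used.
-/

open Finset SimpleGraph Sum

lemma Finset.card_image_filter_ne_lt {γ δ : Type*} [DecidableEq δ] {E : Finset γ} (π : γ → δ)
    {x : γ} (hx : x ∈ E) : #({y ∈ E | π y ≠ π x}.image π) < #(E.image π) := by
  refine card_lt_card ((ssubset_iff_of_subset (image_subset_image (filter_subset _ _))).mpr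
    ⟨π x, mem_image_of_mem π hx, ?_⟩)
  simp

lemma Finset.weighted_card_image_lt_card_filter_ne {γ δ ε : Type*} [DecidableEq δ]
    [DecidableEq ε] {E : Finset γ} (π : γ → δ) (σ : γ → ε) {a b : ℕ} {x : γ} (hx : x ∈ E)
    (hfiber : #{y ∈ E | π y = π x} < a)
    (h : (a - 1) * #(E.image π) + b * #(E.image σ) < #E) :
    (a - 1) * #({y ∈ E | π y ≠ π x}.image π) + b * #({y ∈ E | π y ≠ π x}.image σ) <
      #{y ∈ E | π y ≠ π x} := by
  have hsplit : #{y ∈ E | π y = π x} + #{y ∈ E | π y ≠ π x} = #E :=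
    card_filter_add_card_filter_not _
  have hπ : (a - 1) * #({y ∈ E | π y ≠ π x}.image π) + (a - 1) ≤ (a - 1) * #(E.image π) := by
    simpa [Nat.mul_succ] using Nat.mul_le_mul_left (a - 1) (card_image_filter_ne_lt π hx)
  have hσ : b * #({y ∈ E | π y ≠ π x}.image σ) ≤ b * #(E.image σ) :=
    Nat.mul_le_mul_left b (card_le_card (image_subset_image (filter_subset _ _)))
  omega

theorem Finset.exists_subset_forall_le_card_fiber {α β : Type*} [DecidableEq α] [DecidableEq β]
    (s t : ℕ) (E : Finset (α × β))
    (h : (t - 1) * #(E.image Prod.fst) + (s - 1) * #(E.image Prod.snd) < #E) :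
    ∃ E' ⊆ E, E'.Nonempty ∧
      ∀ p ∈ E', t ≤ #{q ∈ E' | q.1 = p.1} ∧ s ≤ #{q ∈ E' | q.2 = p.2} := by
  induction E using Finset.strongInduction with
  | H E ih =>
  by_cases hgood : ∀ p ∈ E, t ≤ #{q ∈ E | q.1 = p.1} ∧ s ≤ #{q ∈ E | q.2 = p.2}
  · exact ⟨E, subset_rfl, card_pos.mp (by omega), hgood⟩
  obtain ⟨p, hp, hbad⟩ := not_forall₂.mp hgood
  rcases Nat.lt_or_ge #{q ∈ E | q.1 = p.1} t with hfst | hfst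
  · obtain ⟨E', hE', hne, hdeg⟩ := ih {q ∈ E | q.1 ≠ p.1} (filter_ssubset.mpr ⟨p, hp, by simp⟩)
      (weighted_card_image_lt_card_filter_ne Prod.fst Prod.snd hp hfst h)
    exact ⟨E', hE'.trans (filter_subset _ _), hne, hdeg⟩
  · have hsnd : #{q ∈ E | q.2 = p.2} < s := by omega
    obtain ⟨E', hE', hne, hdeg⟩ := ih {q ∈ E | q.2 ≠ p.2} (filter_ssubset.mpr ⟨p, hp, by simp⟩)
      (by simpa only [add_comm] using
        weighted_card_image_lt_card_filter_ne Prod.snd Prod.fst (b := t - 1) hp hsnd (by omega))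
    exact ⟨E', hE'.trans (filter_subset _ _), hne, hdeg⟩

section TreeEmbedding

variable {V W : Type*} [DecidableEq W] {H : SimpleGraph W} [DecidableRel H.Adj]
  {d : W → Bool} {K : Finset W}

theorem SimpleGraph.exists_colorPreserving_copy_of_induce_compl_leaf [Fintype V] [DecidableEq V]
    {T : SimpleGraph V} {c : V → Bool} (hc : ∀ ⦃x y⦄, T.Adj x y → c x ≠ c y)
    (hdeg : ∀ w ∈ K, #{y | c y ≠ d w} ≤ #{x ∈ K | H.Adj w x ∧ d x ≠ d w})
    {v u : V} (hvu : T.Adj v u) (hleaf : ∀ y, T.Adj v y → y = u)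
    (f : T.induce {v}ᶜ →g H) (hf : Function.Injective f) (hfK : ∀ y, f y ∈ K)
    (hfc : ∀ y, d (f y) = c y) :
    ∃ g : T →g H, Function.Injective g ∧ (∀ y, g y ∈ K) ∧ ∀ y, d (g y) = c y := by
  set w := f ⟨u, hvu.ne'⟩
  have hwc : d w = c u := hfc _
  set used := ({y | c y = c v} : Finset ↥({v}ᶜ : Set V)).image f
  have hfresh : #used < #{x ∈ K | H.Adj w x ∧ d x ≠ d w} := calc
    #used ≤ #({y | c y = c v} : Finset ↥({v}ᶜ : Set V)) := card_image_le
    _ ≤ #(({y | c y = c v} : Finset V).erase v) :=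
      card_le_card_of_injOn Subtype.val (fun y hy => mem_erase.mpr ⟨y.2, by simpa using hy⟩)
        Subtype.val_injective.injOn
    _ < #({y | c y = c v} : Finset V) := card_erase_lt_of_mem (by simp)
    _ = #{y | c y ≠ d w} := by simp_rw [hwc, Bool.eq_not_of_ne (hc hvu), Bool.eq_not_iff]
    _ ≤ _ := hdeg w (hfK _)
  obtain ⟨x, hx, hxu⟩ := exists_mem_notMem_of_card_lt_card hfresh
  obtain ⟨hxK, hwx, hxw⟩ := mem_filter.mp hx
  have hxc : d x = c v := Bool.eq_not_of_ne (hc hvu) ▸ Bool.eq_not_iff.mpr (hwc ▸ hxw)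
  let g : V → W := fun y => if hy : y = v then x else f ⟨y, hy⟩
  have hgv : g v = x := dif_pos rfl
  have hg : ∀ y (hy : y ≠ v), g y = f ⟨y, hy⟩ := fun y hy => dif_neg hy
  have hgu : g u = w := hg u hvu.ne'
  have hgx : ∀ y, g y = x → y = v := by
    intro y hy
    by_contra hyv
    rw [hg y hyv] at hy
    exact hxu (mem_image.mpr ⟨⟨y, hyv⟩, by simp [← hfc, hy, hxc], hy⟩)
  have hadj : ∀ a b, T.Adj a b → H.Adj (g a) (g b) := by
    intro a b hab
    by_cases ha : a = v
    · subst ha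
      rw [hleaf b hab, hgv, hgu]
      exact hwx.symm
    by_cases hb : b = v
    · subst hb
      rw [hleaf a hab.symm, hgv, hgu]
      exact hwx
    rw [hg a ha, hg b hb]
    exact f.map_adj (induce_adj.mpr hab)
  have hinj : Function.Injective g := by
    intro a b hab
    by_cases ha : a = v
    · exact ha.trans (hgx b (hab ▸ ha ▸ hgv)).symm
    by_cases hb : b = v
    · exact (hgx a (hab.trans (hb ▸ hgv))).trans hb.symm
    rw [hg a ha, hg b hb] at hab
    exact congrArg Subtype.val (hf hab)
  refine ⟨⟨g, hadj _ _⟩, hinj, fun y => ?_, fun y => ?_⟩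
  · show g y ∈ K
    by_cases hy : y = v
    · exact hy ▸ hgv ▸ hxK
    · exact hg y hy ▸ hfK _
  · show d (g y) = c y
    by_cases hy : y = v
    · exact hy ▸ hgv ▸ hxc
    · exact hg y hy ▸ hfc _

theorem SimpleGraph.IsTree.exists_colorPreserving_copy [Fintype V] {T : SimpleGraph V}
    (hT : T.IsTree) {c : V → Bool} (hc : ∀ ⦃x y⦄, T.Adj x y → c x ≠ c y)
    (hK : ∀ y, ∃ w ∈ K, d w = c y)
    (hdeg : ∀ w ∈ K, #{y | c y ≠ d w} ≤ #{x ∈ K | H.Adj w x ∧ d x ≠ d w}) :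
    ∃ g : T →g H, Function.Injective g ∧ (∀ y, g y ∈ K) ∧ ∀ y, d (g y) = c y := by
  induction hn : Fintype.card V using Nat.strong_induction_on generalizing V with
  | _ n ih =>
  rcases subsingleton_or_nontrivial V with hV | hV
  · obtain ⟨v⟩ := hT.connected.nonempty
    obtain ⟨w, hwK, hwc⟩ := hK v
    refine ⟨⟨fun _ => w, fun {a b} hab => (hab.ne (Subsingleton.elim a b)).elim⟩,
      fun a b _ => Subsingleton.elim a b, fun _ => hwK, fun y => ?_⟩
    exact Subsingleton.elim v y ▸ hwc
  classical
  obtain ⟨v, hv⟩ := hT.exists_vert_degree_one_of_nontrivial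
  obtain ⟨u, hvu, hleaf⟩ := degree_eq_one_iff_existsUnique_adj.mp hv
  have hT' : (T.induce {v}ᶜ).IsTree :=
    ⟨hT.connected.induce_compl_singleton_of_degree_eq_one hv, hT.isAcyclic.induce _⟩
  have hcard : Fintype.card ↥({v}ᶜ : Set V) < n :=
    hn ▸ Fintype.card_lt_of_injective_of_notMem _ Subtype.val_injective (b := v) (by simp)
  obtain ⟨f, hf, hfK, hfc⟩ := ih _ hcard hT' (c := fun y => c y) (fun x y h => hc h)
    (fun y => hK y) (fun w hw => (card_le_card_of_injOn Subtype.val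
      (fun y hy => by simpa using hy) Subtype.val_injective.injOn).trans (hdeg w hw)) rfl
  exact exists_colorPreserving_copy_of_induce_compl_leaf hc hdeg hvu hleaf f hf hfK hfc

end TreeEmbedding

section Bipartite

variable {α β σ τ : Type*}

def SimpleGraph.bipartiteOfFinset (E : Finset (α × β)) : SimpleGraph (α ⊕ β) :=
  fromRel fun
    | inl a, inr b => (a, b) ∈ E
    | _, _ => False

@[simp]
lemma SimpleGraph.bipartiteOfFinset_adj_inl_inr {E : Finset (α × β)} {a : α} {b : β} :
    (bipartiteOfFinset E).Adj (inl a) (inr b) ↔ (a, b) ∈ E := by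
  simp [bipartiteOfFinset]

@[simp]
lemma SimpleGraph.bipartiteOfFinset_adj_inr_inl {E : Finset (α × β)} {a : α} {b : β} :
    (bipartiteOfFinset E).Adj (inr b) (inl a) ↔ (a, b) ∈ E := by
  simp [bipartiteOfFinset]

lemma Finset.card_filter_isRight [Fintype σ] [Fintype τ] :
    #({y | y.isRight} : Finset (σ ⊕ τ)) = Fintype.card τ := by
  have : ({y | y.isRight} : Finset (σ ⊕ τ)) = univ.map .inr := by
    ext y; cases y <;> simp
  rw [this, card_map, card_univ]

lemma Finset.card_filter_isLeft [Fintype σ] [Fintype τ] :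
    #({y | y.isLeft} : Finset (σ ⊕ τ)) = Fintype.card σ := by
  have : ({y | y.isLeft} : Finset (σ ⊕ τ)) = univ.map .inl := by
    ext y; cases y <;> simp
  rw [this, card_map, card_univ]

lemma SimpleGraph.card_compl_side_le_card_adj_bipartiteOfFinset [Fintype σ] [Fintype τ]
    [DecidableEq α] [DecidableEq β] {E : Finset (α × β)} [DecidableRel (bipartiteOfFinset E).Adj]
    (hE : ∀ p ∈ E, Fintype.card τ ≤ #{q ∈ E | q.1 = p.1} ∧ Fintype.card σ ≤ #{q ∈ E | q.2 = p.2})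
    (w : α ⊕ β) (hw : w ∈ (E.image Prod.fst).disjSum (E.image Prod.snd)) :
    #({y | y.isLeft ≠ w.isLeft} : Finset (σ ⊕ τ)) ≤
      #{x ∈ (E.image Prod.fst).disjSum (E.image Prod.snd) |
        (bipartiteOfFinset E).Adj w x ∧ x.isLeft ≠ w.isLeft} := by
  rcases w with a | b
  · obtain ⟨p, hp, rfl⟩ := mem_image.mp (inl_mem_disjSum.mp hw)
    calc #({y | y.isLeft ≠ true} : Finset (σ ⊕ τ))
        = Fintype.card τ := by simpa using card_filter_isRight
      _ ≤ #{q ∈ E | q.1 = p.1} := (hE p hp).1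
      _ ≤ _ := by
        refine card_le_card_of_injOn (fun q => inr q.2) (fun q hq => ?_) fun q hq q' hq' h => ?_
        · obtain ⟨hqE, hq1⟩ := mem_filter.mp hq
          simpa [← hq1, hqE] using ⟨q.1, hqE⟩
        · exact Prod.ext ((mem_filter.mp hq).2.trans (mem_filter.mp hq').2.symm) (inr_injective h)
  · obtain ⟨p, hp, rfl⟩ := mem_image.mp (inr_mem_disjSum.mp hw)
    calc #({y | y.isLeft ≠ false} : Finset (σ ⊕ τ))
        = Fintype.card σ := by simpa using card_filter_isLeft
      _ ≤ #{q ∈ E | q.2 = p.2} := (hE p hp).2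
      _ ≤ _ := by
        refine card_le_card_of_injOn (fun q => inl q.1) (fun q hq => ?_) fun q hq q' hq' h => ?_
        · obtain ⟨hqE, hq2⟩ := mem_filter.mp hq
          simpa [← hq2, hqE] using ⟨q.2, hqE⟩
        · exact Prod.ext (inl_injective h) ((mem_filter.mp hq).2.trans (mem_filter.mp hq').2.symm)

lemma SimpleGraph.Hom.exists_pair_of_bipartiteOfFinset [DecidableEq α] [DecidableEq β]
    {T : SimpleGraph (σ ⊕ τ)} {E : Finset (α × β)}
    (g : T →g bipartiteOfFinset E) (hg : Function.Injective g)
    (hgc : ∀ y, (g y).isLeft = y.isLeft)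
    (hgE : ∀ y, g y ∈ (E.image Prod.fst).disjSum (E.image Prod.snd)) :
    ∃ (fU : σ → α) (fV : τ → β), Function.Injective fU ∧ Function.Injective fV ∧
      (∀ i, fU i ∈ E.image Prod.fst) ∧ (∀ j, fV j ∈ E.image Prod.snd) ∧
      ∀ i j, T.Adj (inl i) (inr j) → (fU i, fV j) ∈ E := by
  choose fU hfU using fun i => isLeft_iff.mp ((hgc (inl i)).trans isLeft_inl)
  choose fV hfV using fun j => isRight_iff.mp (isLeft_eq_false.mp ((hgc (inr j)).trans isLeft_inr))
  refine ⟨fU, fV, fun i i' h => inl_injective (hg (by rw [hfU, hfU, h])),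
    fun j j' h => inr_injective (hg (by rw [hfV, hfV, h])),
    fun i => inl_mem_disjSum.mp (hfU i ▸ hgE _), fun j => inr_mem_disjSum.mp (hfV j ▸ hgE _),
    fun i j h => bipartiteOfFinset_adj_inl_inr.mp (hfU i ▸ hfV j ▸ g.map_adj h)⟩

end Bipartite

theorem stmt_11_general {α β : Type*} (s t : ℕ)
    (A : Finset α) (B : Finset β)
    (E : Finset (α × β)) (hE : E ⊆ A ×ˢ B)
    (hcard : (t - 1) * A.card + (s - 1) * B.card < E.card)
    (T : SimpleGraph (Fin s ⊕ Fin t)) (hT : T.IsTree)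
    (hb1 : ∀ i j : Fin s, ¬ T.Adj (Sum.inl i) (Sum.inl j))
    (hb2 : ∀ i j : Fin t, ¬ T.Adj (Sum.inr i) (Sum.inr j)) :
    ∃ (fU : Fin s → α) (fV : Fin t → β),
      Function.Injective fU ∧ Function.Injective fV ∧
      (∀ i, fU i ∈ A) ∧ (∀ j, fV j ∈ B) ∧
      ∀ i j, T.Adj (Sum.inl i) (Sum.inr j) → (fU i, fV j) ∈ E := by
  classical
  have hA : E.image Prod.fst ⊆ A := image_subset_iff.mpr fun p hp => (mem_product.mp (hE hp)).1
  have hB : E.image Prod.snd ⊆ B := image_subset_iff.mpr fun p hp => (mem_product.mp (hE hp)).2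
  obtain ⟨E', hE'E, ⟨p, hp⟩, hdeg⟩ := exists_subset_forall_le_card_fiber s t E (by
    have := Nat.mul_le_mul_left (t - 1) (card_le_card hA)
    have := Nat.mul_le_mul_left (s - 1) (card_le_card hB)
    omega)
  have hc : ∀ ⦃x y : Fin s ⊕ Fin t⦄, T.Adj x y → x.isLeft ≠ y.isLeft := by
    rintro (i | j) (i' | j') h <;> simp_all
  have hK : ∀ y : Fin s ⊕ Fin t,
      ∃ w ∈ (E'.image Prod.fst).disjSum (E'.image Prod.snd), w.isLeft = y.isLeft := by
    rintro (i | j)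
    · exact ⟨inl p.1, inl_mem_disjSum.mpr (mem_image_of_mem _ hp), rfl⟩
    · exact ⟨inr p.2, inr_mem_disjSum.mpr (mem_image_of_mem _ hp), rfl⟩
  obtain ⟨g, hg, hgK, hgc⟩ := hT.exists_colorPreserving_copy (H := bipartiteOfFinset E') hc hK
    (card_compl_side_le_card_adj_bipartiteOfFinset (by simpa using hdeg))
  obtain ⟨fU, fV, hfU, hfV, hUE, hVE, hadj⟩ := g.exists_pair_of_bipartiteOfFinset hg hgc hgK
  exact ⟨fU, fV, hfU, hfV, fun i => hA (image_subset_image hE'E (hUE i)),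
    fun j => hB (image_subset_image hE'E (hVE j)), fun i j h => hE'E (hadj i j h)⟩

/-- If a bipartite graph with parts `A`, `B` has more than
`(t-1)|A| + (s-1)|B|` edges, then it contains every tree with bipartition
classes of sizes `s` and `t`, with the `s`-class embedded in `A` and the
`t`-class embedded in `B`. -/
theorem stmt_11 {α β : Type*} [DecidableEq α] [DecidableEq β] (s t : ℕ)
    (hs : 0 < s) (ht : 0 < t) (A : Finset α) (B : Finset β)
    (E : Finset (α × β)) (hE : E ⊆ A ×ˢ B)
    (hcard : (t - 1) * A.card + (s - 1) * B.card < E.card)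
    (T : SimpleGraph (Fin s ⊕ Fin t)) (hT : T.IsTree)
    (hb1 : ∀ i j : Fin s, ¬ T.Adj (Sum.inl i) (Sum.inl j))
    (hb2 : ∀ i j : Fin t, ¬ T.Adj (Sum.inr i) (Sum.inr j)) :
    ∃ (fU : Fin s → α) (fV : Fin t → β),
      Function.Injective fU ∧ Function.Injective fV ∧
      (∀ i, fU i ∈ A) ∧ (∀ j, fV j ∈ B) ∧
      ∀ i j, T.Adj (Sum.inl i) (Sum.inr j) → (fU i, fV j) ∈ E :=
  stmt_11_general s t A B E hE hcard T hT hb1 hb2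
end

section
/- Let a, b ≥ 1, r = a+b, and let T be a tree with bipartition (U,V), |U| = s, |V| = t. Let A be an a-uniform matching and B a b-uniform matching on disjoint vertex sets inside an r-uniform hypergraph H, and let H_1(A,B) = {e ∪ f : e ∈ A, f ∈ B, e ∪ f ∈ H}. If H_1(A,B) contains no copy of the (a,b)-blowup T(a,b), then |H_1(A,B)| ≤ (t−1)|A| + (s−1)|B|. -/
/-!
The pairs `(e, f) ∈ A × B` with `e ∪ f ∈ H` form a bipartite graph `P` between `A` and `B`
with at least `|H₁(A,B)|` edges. If `|P| > (t-1)|A| + (s-1)|B|`, repeatedly deleting an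
`A`-vertex of degree `< t` or a `B`-vertex of degree `< s` keeps this inequality (a deletion
removes fewer edges than it lowers the right-hand side), so it ends in a nonempty subgraph in
which `A`-vertices have degree `≥ t` and `B`-vertices degree `≥ s`. Such a graph contains every
tree with parts of sizes `s` and `t`: embed it greedily, growing a path-closed subtree one vertex
at a time. The new vertex has exactly one embedded neighbour, whose image has more neighbours
than there are already embedded vertices on the new vertex's side. Since `A` and `B` are
vertex-disjoint matchings, the embedded tree is a copy of `T(a,b)` in `H₁(A,B)`.
-/

/-- The hypergraph `H₁(A,B)`: edges of `H` of the form `e ∪ f` with `e ∈ A`, `f ∈ B`. -/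
def templateEdges {α : Type*} [DecidableEq α] (H A B : Finset (Finset α)) :
    Finset (Finset α) :=
  ((A ×ˢ B).filter (fun p => p.1 ∪ p.2 ∈ H)).image (fun p => p.1 ∪ p.2)

/-- `H₁` contains a copy of the `(a,b)`-blowup of the bipartite tree `T` on
`Fin s ⊕ Fin t`: pairwise disjoint `a`-sets `U i` and `b`-sets `W j` with
`U i ∪ W j ∈ H₁` for each edge `(inl i, inr j)` of `T`. -/
def HasBlowupCopy {α : Type*} [DecidableEq α] (a b s t : ℕ)
    (T : SimpleGraph (Fin s ⊕ Fin t)) (H₁ : Finset (Finset α)) : Prop :=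
  ∃ (U : Fin s → Finset α) (W : Fin t → Finset α),
    (∀ i, (U i).card = a) ∧ (∀ j, (W j).card = b) ∧
    (∀ i i', i ≠ i' → Disjoint (U i) (U i')) ∧
    (∀ j j', j ≠ j' → Disjoint (W j) (W j')) ∧
    (∀ i j, Disjoint (U i) (W j)) ∧
    (∀ i j, T.Adj (Sum.inl i) (Sum.inr j) → U i ∪ W j ∈ H₁)

open Finset SimpleGraph

namespace SimpleGraph

variable {V : Type*} {G : SimpleGraph V}

def IsPathClosed (G : SimpleGraph V) (S : Finset V) : Prop :=
  ∀ ⦃x y : V⦄ (p : G.Walk x y), p.IsPath → x ∈ S → y ∈ S → ∀ z ∈ p.support, z ∈ S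

lemma isPathClosed_singleton (x : V) : G.IsPathClosed {x} := by
  intro a b p hp ha hb z hz
  rw [mem_singleton] at ha hb
  subst ha hb
  rw [(Walk.isPath_iff_nil.1 hp).eq_nil] at hz
  simpa using hz

namespace IsPathClosed

variable {S : Finset V} {u u' v : V}

lemma eq_of_adj (hS : G.IsPathClosed S) (hu : u ∈ S) (hu' : u' ∈ S) (hv : v ∉ S)
    (huv : G.Adj u v) (hu'v : G.Adj u' v) : u = u' := by
  by_contra hne
  have hpath : (Walk.cons huv (Walk.cons hu'v.symm Walk.nil)).IsPath := by
    simp [Walk.cons_isPath_iff, huv.ne, hu'v.ne.symm, hne]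
  exact hv (hS _ hpath hu hu' v (by simp))

lemma insert_of_adj [DecidableEq V] (hG : G.IsTree) (hS : G.IsPathClosed S) (hu : u ∈ S)
    (hv : v ∉ S) (huv : G.Adj u v) : G.IsPathClosed (insert v S) := by
  have hpath_from_v : ∀ ⦃x⦄, x ∈ S → ∀ p : G.Walk v x, p.IsPath →
      ∀ z ∈ p.support, z ∈ insert v S := by
    intro x hx p hp z hz
    obtain ⟨q, hq⟩ := (hG.connected.preconnected u x).exists_isPath
    have hqS := hS q hq hu hx
    have hpq : p = Walk.cons huv.symm q := (hG.existsUnique_path v x).unique hp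
      ((Walk.cons_isPath_iff _ _).2 ⟨hq, fun h => hv (hqS v h)⟩)
    subst hpq
    rw [Walk.support_cons, List.mem_cons] at hz
    rcases hz with rfl | hz
    · exact mem_insert_self _ _
    · exact mem_insert_of_mem (hqS z hz)
  intro x y p hp hx hy z hz
  rcases mem_insert.1 hx with rfl | hxS
  · rcases mem_insert.1 hy with rfl | hyS
    · rw [(Walk.isPath_iff_nil.1 hp).eq_nil] at hz
      exact mem_insert.2 (.inl (by simpa using hz))
    · exact hpath_from_v hyS p hp z hz
  · rcases mem_insert.1 hy with rfl | hyS
    · exact hpath_from_v hxS p.reverse hp.reverse z (by simpa using hz)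
    · exact mem_insert_of_mem (hS p hp hxS hyS z hz)

end IsPathClosed

lemma Connected.exists_adj_of_nonempty_of_card_lt [Fintype V] (hG : G.Connected) {S : Finset V}
    (hS : S.Nonempty) (hSV : #S < Fintype.card V) : ∃ u ∈ S, ∃ v ∉ S, G.Adj u v := by
  obtain ⟨x, hx⟩ := hS
  obtain ⟨y, -, hy⟩ := exists_mem_notMem_of_card_lt_card (t := univ) hSV
  obtain ⟨d, -, hd⟩ := (hG.preconnected x y).some.exists_boundary_dart (S : Set V) hx hy
  exact ⟨d.fst, hd.1, d.snd, hd.2, d.adj⟩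

end SimpleGraph

namespace Finset

lemma weighted_card_image_lt_card_filter_ne_s12 {X Y Z : Type*} [DecidableEq Y] [DecidableEq Z]
    {Q : Finset X} (f : X → Y) (g : X → Z) {k l : ℕ} {y : Y} (hy : y ∈ Q.image f)
    (hy_small : #{x ∈ Q | f x = y} < k)
    (hQ : (k - 1) * #(Q.image f) + (l - 1) * #(Q.image g) < #Q) :
    (k - 1) * #({x ∈ Q | f x ≠ y}.image f) + (l - 1) * #({x ∈ Q | f x ≠ y}.image g)
      < #{x ∈ Q | f x ≠ y} := by
  have hf : #({x ∈ Q | f x ≠ y}.image f) + 1 = #(Q.image f) := by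
    have : {x ∈ Q | f x ≠ y}.image f = (Q.image f).erase y := by rw [← filter_ne', filter_image]
    rw [this, card_erase_add_one hy]
  have hg : (l - 1) * #({x ∈ Q | f x ≠ y}.image g) ≤ (l - 1) * #(Q.image g) :=
    Nat.mul_le_mul_left _ (card_le_card (image_subset_image (filter_subset _ _)))
  have hsplit : #{x ∈ Q | f x = y} + #{x ∈ Q | f x ≠ y} = #Q :=
    card_filter_add_card_filter_not _
  rw [← hf, mul_add] at hQ
  omega

theorem exists_nonempty_subset_le_card_filter {β γ : Type*} [DecidableEq β] [DecidableEq γ]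
    (s t : ℕ) (Q : Finset (β × γ))
    (hQ : (t - 1) * #(Q.image Prod.fst) + (s - 1) * #(Q.image Prod.snd) < #Q) :
    ∃ Q' ⊆ Q, Q'.Nonempty ∧
      ∀ p ∈ Q', t ≤ #{q ∈ Q' | q.1 = p.1} ∧ s ≤ #{q ∈ Q' | q.2 = p.2} := by
  induction Q using Finset.strongInduction with
  | H Q ih =>
    by_cases hgood : ∀ p ∈ Q, t ≤ #{q ∈ Q | q.1 = p.1} ∧ s ≤ #{q ∈ Q | q.2 = p.2}
    · exact ⟨Q, subset_rfl, card_pos.1 (by omega), hgood⟩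
    push Not at hgood
    obtain ⟨p, hp, hbad⟩ := hgood
    by_cases hrow : #{q ∈ Q | q.1 = p.1} < t
    · have hssub : {q ∈ Q | q.1 ≠ p.1} ⊂ Q := filter_ssubset.2 ⟨p, hp, by simp⟩
      obtain ⟨Q', hQ', hne, hdeg⟩ := ih _ hssub <|
        weighted_card_image_lt_card_filter_ne_s12 Prod.fst Prod.snd (mem_image_of_mem _ hp) hrow hQ
      exact ⟨Q', hQ'.trans hssub.subset, hne, hdeg⟩
    · have hcol := hbad (not_lt.1 hrow)
      have hssub : {q ∈ Q | q.2 ≠ p.2} ⊂ Q := filter_ssubset.2 ⟨p, hp, by simp⟩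
      obtain ⟨Q', hQ', hne, hdeg⟩ := ih _ hssub <| by
        rw [add_comm] at hQ ⊢
        exact
          weighted_card_image_lt_card_filter_ne_s12 Prod.snd Prod.fst (mem_image_of_mem _ hp) hcol hQ
      exact ⟨Q', hQ'.trans hssub.subset, hne, hdeg⟩

lemma exists_snd_notMem {β γ : Type*} [DecidableEq β] [DecidableEq γ]
    {Q : Finset (β × γ)} {e : β} {X : Finset γ} (hX : #X < #{q ∈ Q | q.1 = e}) :
    ∃ f ∉ X, (e, f) ∈ Q := by
  have hinj : Set.InjOn Prod.snd (SetLike.coe {q ∈ Q | q.1 = e}) := fun p hp q hq hpq =>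
    Prod.ext ((mem_filter.1 hp).2.trans (mem_filter.1 hq).2.symm) hpq
  rw [← card_image_of_injOn hinj] at hX
  obtain ⟨f, hf, hfX⟩ := exists_mem_notMem_of_card_lt_card hX
  obtain ⟨q, hq, rfl⟩ := mem_image.1 hf
  rw [mem_filter] at hq
  exact ⟨q.2, hfX, hq.2 ▸ hq.1⟩

lemma exists_fst_notMem {β γ : Type*} [DecidableEq β] [DecidableEq γ]
    {Q : Finset (β × γ)} {f : γ} {X : Finset β} (hX : #X < #{q ∈ Q | q.2 = f}) :
    ∃ e ∉ X, (e, f) ∈ Q := by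
  have hinj : Set.InjOn Prod.fst (SetLike.coe {q ∈ Q | q.2 = f}) := fun p hp q hq hpq =>
    Prod.ext hpq ((mem_filter.1 hp).2.trans (mem_filter.1 hq).2.symm)
  rw [← card_image_of_injOn hinj] at hX
  obtain ⟨e, he, heX⟩ := exists_mem_notMem_of_card_lt_card hX
  obtain ⟨q, hq, rfl⟩ := mem_image.1 he
  rw [mem_filter] at hq
  exact ⟨q.1, heX, hq.2 ▸ hq.1⟩

end Finset

section TreeEmbedding

variable {σ τ β γ : Type*} {T : SimpleGraph (σ ⊕ τ)} {Q : Finset (β × γ)}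

variable (T Q) in
/-- The `exists_mem_*` fields make the degree bounds of `Q` available at every embedded vertex,
including the root of a one-vertex subtree. -/
structure IsPartialEmbedding (S : Finset (σ ⊕ τ)) (φ : σ → β) (ψ : τ → γ) : Prop where
  injOn_left : Set.InjOn φ {i | .inl i ∈ S}
  injOn_right : Set.InjOn ψ {j | .inr j ∈ S}
  exists_mem_left : ∀ i, .inl i ∈ S → ∃ f, (φ i, f) ∈ Q
  exists_mem_right : ∀ j, .inr j ∈ S → ∃ e, (e, ψ j) ∈ Q
  mem_of_adj : ∀ i j, .inl i ∈ S → .inr j ∈ S → T.Adj (.inl i) (.inr j) → (φ i, ψ j) ∈ Q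

namespace IsPartialEmbedding

variable [DecidableEq σ] [DecidableEq τ] {S : Finset (σ ⊕ τ)} {φ : σ → β} {ψ : τ → γ}

lemma insert_inl (h : IsPartialEmbedding T Q S φ ψ) {i : σ} {j : τ} {e : β}
    (hi : .inl i ∉ S)
    (huniq : ∀ j', .inr j' ∈ S → T.Adj (.inl i) (.inr j') → j' = j)
    (he : (e, ψ j) ∈ Q) (hfresh : ∀ i', .inl i' ∈ S → φ i' ≠ e) :
    IsPartialEmbedding T Q (insert (.inl i) S) (Function.update φ i e) ψ := by
  have hφ : ∀ i', .inl i' ∈ S → Function.update φ i e i' = φ i' := fun i' hi' =>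
    Function.update_of_ne (by rintro rfl; exact hi hi') _ _
  refine ⟨?_, by simpa using h.injOn_right, ?_, by simpa using h.exists_mem_right, ?_⟩
  · have hset : {i' | .inl i' ∈ insert (.inl i) S} = insert i {i' | .inl i' ∈ S} := by
      ext; simp
    rw [hset, Set.injOn_insert (by simpa using hi)]
    refine ⟨h.injOn_left.congr fun i' hi' => (hφ i' hi').symm, ?_⟩
    rintro ⟨i', hi', hi'e⟩
    rw [hφ i' hi', Function.update_self] at hi'e
    exact hfresh i' hi' hi'e
  · intro i' hi'
    rcases mem_insert.1 hi' with hii' | hi'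
    · rw [Sum.inl_injective hii', Function.update_self]
      exact ⟨ψ j, he⟩
    · rw [hφ _ hi']
      exact h.exists_mem_left i' hi'
  · intro i' j' hi' hj' hadj
    have hj'S : .inr j' ∈ S := by simpa using hj'
    rcases mem_insert.1 hi' with hii' | hi'
    · rw [Sum.inl_injective hii'] at hadj ⊢
      rw [Function.update_self, huniq j' hj'S hadj]
      exact he
    · rw [hφ _ hi']
      exact h.mem_of_adj i' j' hi' hj'S hadj

lemma insert_inr (h : IsPartialEmbedding T Q S φ ψ) {i : σ} {j : τ} {f : γ}
    (hj : .inr j ∉ S)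
    (huniq : ∀ i', .inl i' ∈ S → T.Adj (.inl i') (.inr j) → i' = i)
    (hf : (φ i, f) ∈ Q) (hfresh : ∀ j', .inr j' ∈ S → ψ j' ≠ f) :
    IsPartialEmbedding T Q (insert (.inr j) S) φ (Function.update ψ j f) := by
  have hψ : ∀ j', .inr j' ∈ S → Function.update ψ j f j' = ψ j' := fun j' hj' =>
    Function.update_of_ne (by rintro rfl; exact hj hj') _ _
  refine ⟨by simpa using h.injOn_left, ?_, by simpa using h.exists_mem_left, ?_, ?_⟩
  · have hset : {j' | .inr j' ∈ insert (.inr j) S} = insert j {j' | .inr j' ∈ S} := by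
      ext; simp
    rw [hset, Set.injOn_insert (by simpa using hj)]
    refine ⟨h.injOn_right.congr fun j' hj' => (hψ j' hj').symm, ?_⟩
    rintro ⟨j', hj', hj'f⟩
    rw [hψ j' hj', Function.update_self] at hj'f
    exact hfresh j' hj' hj'f
  · intro j' hj'
    rcases mem_insert.1 hj' with hjj' | hj'
    · rw [Sum.inr_injective hjj', Function.update_self]
      exact ⟨φ i, hf⟩
    · rw [hψ _ hj']
      exact h.exists_mem_right j' hj'
  · intro i' j' hi' hj' hadj
    have hi'S : .inl i' ∈ S := by simpa using hi'
    rcases mem_insert.1 hj' with hjj' | hj'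
    · rw [Sum.inr_injective hjj'] at hadj ⊢
      rw [Function.update_self, huniq i' hi'S hadj]
      exact hf
    · rw [hψ _ hj']
      exact h.mem_of_adj i' j' hi'S hj' hadj

variable [Fintype σ] [Fintype τ] [DecidableEq β] [DecidableEq γ]

lemma exists_insert (hb1 : ∀ i i', ¬T.Adj (.inl i) (.inl i'))
    (hb2 : ∀ j j', ¬T.Adj (.inr j) (.inr j'))
    (hdeg : ∀ p ∈ Q, Fintype.card τ ≤ #{q ∈ Q | q.1 = p.1} ∧
      Fintype.card σ ≤ #{q ∈ Q | q.2 = p.2})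
    (h : IsPartialEmbedding T Q S φ ψ) (hS : T.IsPathClosed S) {u v : σ ⊕ τ} (hu : u ∈ S)
    (hv : v ∉ S) (huv : T.Adj u v) :
    ∃ φ' ψ', IsPartialEmbedding T Q (insert v S) φ' ψ' := by
  rcases u with i | j <;> rcases v with i' | j'
  · exact (hb1 _ _ huv).elim
  · obtain ⟨f₀, hf₀⟩ := h.exists_mem_left i hu
    have hused : #((univ.filter fun j => .inr j ∈ S).image ψ) < #{q ∈ Q | q.1 = φ i} :=
      calc _ ≤ #(univ.filter fun j => .inr j ∈ S) := card_image_le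
        _ < Fintype.card τ := card_lt_univ_of_notMem (by simpa using hv)
        _ ≤ _ := (hdeg _ hf₀).1
    obtain ⟨f, hfused, hf⟩ := exists_snd_notMem hused
    refine ⟨φ, Function.update ψ j' f, h.insert_inr hv (fun i'' hi'' hadj => ?_) hf ?_⟩
    · exact Sum.inl_injective (hS.eq_of_adj hi'' hu hv hadj huv)
    · rintro j'' hj'' rfl
      exact hfused (mem_image_of_mem _ (by simpa using hj''))
  · obtain ⟨e₀, he₀⟩ := h.exists_mem_right j hu
    have hused : #((univ.filter fun i => .inl i ∈ S).image φ) < #{q ∈ Q | q.2 = ψ j} :=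
      calc _ ≤ #(univ.filter fun i => .inl i ∈ S) := card_image_le
        _ < Fintype.card σ := card_lt_univ_of_notMem (by simpa using hv)
        _ ≤ _ := (hdeg _ he₀).2
    obtain ⟨e, heused, he⟩ := exists_fst_notMem hused
    refine ⟨Function.update φ i' e, ψ, h.insert_inl hv (fun j'' hj'' hadj => ?_) he ?_⟩
    · exact Sum.inr_injective (hS.eq_of_adj hj'' hu hv hadj.symm huv)
    · rintro i'' hi'' rfl
      exact heused (mem_image_of_mem _ (by simpa using hi''))
  · exact (hb2 _ _ huv).elim

end IsPartialEmbedding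

theorem SimpleGraph.IsTree.exists_isPartialEmbedding_univ [Fintype σ] [Fintype τ]
    [DecidableEq σ] [DecidableEq τ] [DecidableEq β] [DecidableEq γ] (hT : T.IsTree)
    (hb1 : ∀ i i', ¬T.Adj (.inl i) (.inl i')) (hb2 : ∀ j j', ¬T.Adj (.inr j) (.inr j'))
    (hQ : Q.Nonempty)
    (hdeg : ∀ p ∈ Q, Fintype.card τ ≤ #{q ∈ Q | q.1 = p.1} ∧
      Fintype.card σ ≤ #{q ∈ Q | q.2 = p.2}) :
    ∃ φ ψ, IsPartialEmbedding T Q univ φ ψ := by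
  have grow : ∀ n < Fintype.card (σ ⊕ τ), ∃ S : Finset (σ ⊕ τ), #S = n + 1 ∧
      T.IsPathClosed S ∧ ∃ φ ψ, IsPartialEmbedding T Q S φ ψ := by
    intro n hn
    induction n with
    | zero =>
      obtain ⟨q, hq⟩ := hQ
      obtain ⟨r⟩ := hT.connected.nonempty
      exact ⟨{r}, card_singleton r, isPathClosed_singleton r, fun _ => q.1, fun _ => q.2,
        fun _ hx _ hy _ => Sum.inl_injective ((mem_singleton.1 hx).trans (mem_singleton.1 hy).symm),
        fun _ hx _ hy _ => Sum.inr_injective ((mem_singleton.1 hx).trans (mem_singleton.1 hy).symm),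
        fun _ _ => ⟨q.2, hq⟩, fun _ _ => ⟨q.1, hq⟩, fun _ _ _ _ _ => hq⟩
    | succ n ih =>
      obtain ⟨S, hcard, hS, φ, ψ, h⟩ := ih (by omega)
      obtain ⟨u, hu, v, hv, huv⟩ :=
        hT.connected.exists_adj_of_nonempty_of_card_lt (S := S) (card_pos.1 (by omega)) (by omega)
      obtain ⟨φ', ψ', h'⟩ := h.exists_insert hb1 hb2 hdeg hS hu hv huv
      exact ⟨insert v S, by rw [card_insert_of_notMem hv, hcard], hS.insert_of_adj hT hu hv huv,
        φ', ψ', h'⟩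
  have : 0 < Fintype.card (σ ⊕ τ) := Fintype.card_pos_iff.2 hT.connected.nonempty
  obtain ⟨S, hcard, -, φ, ψ, h⟩ := grow (Fintype.card (σ ⊕ τ) - 1) (Nat.sub_one_lt this.ne')
  rw [eq_univ_of_card S (by omega)] at h
  exact ⟨φ, ψ, h⟩

end TreeEmbedding

lemma hasBlowupCopy_of_isPartialEmbedding {α : Type*} [DecidableEq α] {a b s t : ℕ}
    {T : SimpleGraph (Fin s ⊕ Fin t)} {H A B : Finset (Finset α)}
    {Q : Finset (Finset α × Finset α)} {φ : Fin s → Finset α} {ψ : Fin t → Finset α}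
    (hAa : ∀ e ∈ A, e.card = a) (hBb : ∀ f ∈ B, f.card = b)
    (hAm : ∀ e ∈ A, ∀ e' ∈ A, e ≠ e' → Disjoint e e')
    (hBm : ∀ f ∈ B, ∀ f' ∈ B, f ≠ f' → Disjoint f f')
    (hAB : ∀ e ∈ A, ∀ f ∈ B, Disjoint e f)
    (hQ : Q ⊆ {p ∈ A ×ˢ B | p.1 ∪ p.2 ∈ H}) (h : IsPartialEmbedding T Q univ φ ψ) :
    HasBlowupCopy a b s t T (templateEdges H A B) := by
  have hφA : ∀ i, φ i ∈ A := fun i =>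
    have ⟨_, hf⟩ := h.exists_mem_left i (mem_univ _)
    (mem_product.1 (mem_filter.1 (hQ hf)).1).1
  have hψB : ∀ j, ψ j ∈ B := fun j =>
    have ⟨_, he⟩ := h.exists_mem_right j (mem_univ _)
    (mem_product.1 (mem_filter.1 (hQ he)).1).2
  refine ⟨φ, ψ, fun i => hAa _ (hφA i), fun j => hBb _ (hψB j), fun i i' hii' => ?_,
    fun j j' hjj' => ?_, fun i j => hAB _ (hφA i) _ (hψB j), fun i j hadj => ?_⟩
  · exact hAm _ (hφA i) _ (hφA i') fun he => hii' (h.injOn_left (by simp) (by simp) he)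
  · exact hBm _ (hψB j) _ (hψB j') fun hf => hjj' (h.injOn_right (by simp) (by simp) hf)
  · exact mem_image_of_mem _ (hQ (h.mem_of_adj i j (mem_univ _) (mem_univ _) hadj))

theorem stmt_12_general {α : Type*} [DecidableEq α] (a b s t : ℕ)
    (T : SimpleGraph (Fin s ⊕ Fin t)) (hT : T.IsTree)
    (hb1 : ∀ i j : Fin s, ¬ T.Adj (Sum.inl i) (Sum.inl j))
    (hb2 : ∀ i j : Fin t, ¬ T.Adj (Sum.inr i) (Sum.inr j))
    (H A B : Finset (Finset α))
    (hAa : ∀ e ∈ A, e.card = a) (hBb : ∀ f ∈ B, f.card = b)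
    (hAm : ∀ e ∈ A, ∀ e' ∈ A, e ≠ e' → Disjoint e e')
    (hBm : ∀ f ∈ B, ∀ f' ∈ B, f ≠ f' → Disjoint f f')
    (hAB : ∀ e ∈ A, ∀ f ∈ B, Disjoint e f)
    (hfree : ¬ HasBlowupCopy a b s t T (templateEdges H A B)) :
    (templateEdges H A B).card ≤ (t - 1) * A.card + (s - 1) * B.card := by
  by_contra! hlarge
  set P := {p ∈ A ×ˢ B | p.1 ∪ p.2 ∈ H}
  have hPA : P.image Prod.fst ⊆ A := fun x hx => by
    obtain ⟨p, hp, rfl⟩ := mem_image.1 hx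
    exact (mem_product.1 (mem_filter.1 hp).1).1
  have hPB : P.image Prod.snd ⊆ B := fun x hx => by
    obtain ⟨p, hp, rfl⟩ := mem_image.1 hx
    exact (mem_product.1 (mem_filter.1 hp).1).2
  have hP : (t - 1) * #(P.image Prod.fst) + (s - 1) * #(P.image Prod.snd) < #P :=
    calc _ ≤ (t - 1) * #A + (s - 1) * #B := by gcongr
      _ < #(templateEdges H A B) := hlarge
      _ ≤ #P := card_image_le
  obtain ⟨Q, hQP, hQ, hdeg⟩ := exists_nonempty_subset_le_card_filter s t P hP
  obtain ⟨φ, ψ, h⟩ := hT.exists_isPartialEmbedding_univ hb1 hb2 hQ (by simpa using hdeg)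
  exact hfree (hasBlowupCopy_of_isPartialEmbedding hAa hBb hAm hBm hAB hQP h)

/-- If `A` is an `a`-uniform matching, `B` a `b`-uniform matching, vertex-disjoint
from each other, and `H₁(A,B)` contains no copy of the `(a,b)`-blowup of the tree
`T` with bipartition classes of sizes `s`, `t`, then
`|H₁(A,B)| ≤ (t-1)|A| + (s-1)|B|`. -/
theorem stmt_12 {α : Type*} [DecidableEq α] (a b r s t : ℕ)
    (ha : 1 ≤ a) (hb : 1 ≤ b) (hr : r = a + b)
    (T : SimpleGraph (Fin s ⊕ Fin t)) (hT : T.IsTree)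
    (hb1 : ∀ i j : Fin s, ¬ T.Adj (Sum.inl i) (Sum.inl j))
    (hb2 : ∀ i j : Fin t, ¬ T.Adj (Sum.inr i) (Sum.inr j))
    (H A B : Finset (Finset α))
    (hHr : ∀ e ∈ H, e.card = r)
    (hAa : ∀ e ∈ A, e.card = a) (hBb : ∀ f ∈ B, f.card = b)
    (hAm : ∀ e ∈ A, ∀ e' ∈ A, e ≠ e' → Disjoint e e')
    (hBm : ∀ f ∈ B, ∀ f' ∈ B, f ≠ f' → Disjoint f f')
    (hAB : ∀ e ∈ A, ∀ f ∈ B, Disjoint e f)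
    (hfree : ¬ HasBlowupCopy a b s t T (templateEdges H A B)) :
    (templateEdges H A B).card ≤ (t - 1) * A.card + (s - 1) * B.card :=
  stmt_12_general a b s t T hT hb1 hb2 H A B hAa hBb hAm hBm hAB hfree
end

section
/- Let a, b ≥ 1, r = a+b, and let T be a tree with bipartition classes of sizes s, t. Then the (a,b)-blowup T(a,b) has a crosscut, and its minimum crosscut size equals min(s, t). -/
/-!
Choosing one vertex from each blowup set of one bipartition class gives a crosscut of that size.
Conversely, call a vertex of `T` marked when a given crosscut `X` meets its blowup set. Each
edge `U i ∪ W j` meets `X` exactly once, so every edge of `T` has exactly one marked endpoint;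
as `T` is connected and bipartite, the marked vertices form a whole class. The blowup sets of
that class are disjoint and all meet `X`, hence `#X ≥ min s t`.
-/

/-- The `(a,b)`-blowup of the bipartite tree `T` determined by the disjoint
`a`-sets `U i` and `b`-sets `W j`. -/
def blowup {α : Type*} [DecidableEq α] {s t : ℕ} (T : SimpleGraph (Fin s ⊕ Fin t))
    [DecidableRel T.Adj] (U : Fin s → Finset α) (W : Fin t → Finset α) :
    Finset (Finset α) :=
  ((Finset.univ ×ˢ Finset.univ).filter
      (fun p : Fin s × Fin t => T.Adj (Sum.inl p.1) (Sum.inr p.2))).image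
    (fun p => U p.1 ∪ W p.2)

open Finset Function Sum

lemma SimpleGraph.Reachable.apply_eq_of_forall_adj {V β : Type*} {G : SimpleGraph V}
    {f : V → β} (hf : ∀ v w, G.Adj v w → f v = f w) {v w : V} (h : G.Reachable v w) :
    f v = f w := by
  obtain ⟨p⟩ := h
  induction p with
  | nil => rfl
  | cons hadj _ ih => exact (hf _ _ hadj).trans ih

def IsCrosscut {α : Type*} [DecidableEq α] (H : Finset (Finset α)) (X : Finset α) : Prop :=
  ∀ e ∈ H, #(e ∩ X) = 1

section DisjointFamily

variable {ι α : Type*} {A : ι → Finset α}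

lemma injective_of_pairwise_disjoint_of_mem (hA : Pairwise (Disjoint on A)) {x : ι → α}
    (hx : ∀ i, x i ∈ A i) : Injective x := by
  intro i j hij
  by_contra hne
  exact disjoint_left.mp (hA hne) (hx i) (hij ▸ hx j)

variable [Fintype ι] [DecidableEq α]

lemma inter_image_eq_singleton_of_pairwise_disjoint (hA : Pairwise (Disjoint on A))
    {x : ι → α} (hx : ∀ i, x i ∈ A i) (i : ι) : A i ∩ univ.image x = {x i} := by
  ext y
  simp only [mem_inter, mem_image, mem_univ, true_and, mem_singleton]
  constructor
  · rintro ⟨hy, j, rfl⟩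
    by_contra hne
    exact disjoint_left.mp (hA fun hji => hne (congrArg x hji)) (hx j) hy
  · rintro rfl
    exact ⟨hx i, i, rfl⟩

lemma inter_image_eq_empty_of_forall_disjoint {B : Finset α} (hB : ∀ i, Disjoint (A i) B)
    {x : ι → α} (hx : ∀ i, x i ∈ A i) : B ∩ univ.image x = ∅ := by
  refine disjoint_iff_inter_eq_empty.mp (disjoint_right.mpr ?_)
  simp only [mem_image, mem_univ, true_and]
  rintro _ ⟨i, rfl⟩
  exact disjoint_left.mp (hB i) (hx i)

lemma card_univ_image_of_pairwise_disjoint (hA : Pairwise (Disjoint on A)) {x : ι → α}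
    (hx : ∀ i, x i ∈ A i) : #(univ.image x) = Fintype.card ι := by
  rw [card_image_of_injective _ (injective_of_pairwise_disjoint_of_mem hA hx), card_univ]

lemma card_le_of_forall_inter_nonempty (hA : Pairwise (Disjoint on A)) {X : Finset α}
    (hX : ∀ i, (A i ∩ X).Nonempty) : Fintype.card ι ≤ #X := by
  choose x hx using hX
  rw [← card_univ_image_of_pairwise_disjoint hA fun i => (mem_inter.mp (hx i)).1]
  exact card_le_card <| image_subset_iff.mpr fun i _ => (mem_inter.mp (hx i)).2

end DisjointFamily

section Blowup

variable {α : Type*} [DecidableEq α] {s t : ℕ} {T : SimpleGraph (Fin s ⊕ Fin t)}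
  [DecidableRel T.Adj] {U : Fin s → Finset α} {W : Fin t → Finset α}

lemma mem_blowup {e : Finset α} :
    e ∈ blowup T U W ↔ ∃ i j, T.Adj (inl i) (inr j) ∧ U i ∪ W j = e := by
  simp only [blowup, mem_image, mem_filter, mem_product, mem_univ, true_and, Prod.exists]

lemma isCrosscut_blowup_iff (hUW : ∀ i j, Disjoint (U i) (W j)) {X : Finset α} :
    IsCrosscut (blowup T U W) X ↔
      ∀ i j, T.Adj (inl i) (inr j) → #(U i ∩ X) + #(W j ∩ X) = 1 := by
  have hcard : ∀ i j, #((U i ∪ W j) ∩ X) = #(U i ∩ X) + #(W j ∩ X) := fun i j => by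
    rw [union_inter_distrib_right,
      card_union_of_disjoint ((hUW i j).mono inter_subset_left inter_subset_left)]
  constructor
  · intro hX i j hij
    rw [← hcard]
    exact hX _ (mem_blowup.mpr ⟨i, j, hij, rfl⟩)
  · intro hX e he
    obtain ⟨i, j, hij, rfl⟩ := mem_blowup.mp he
    rw [hcard]
    exact hX i j hij

lemma exists_isCrosscut_blowup_card_eq_left (hU : ∀ i, (U i).Nonempty)
    (hUm : Pairwise (Disjoint on U)) (hUW : ∀ i j, Disjoint (U i) (W j)) :
    ∃ X, IsCrosscut (blowup T U W) X ∧ #X = s := by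
  choose u hu using hU
  refine ⟨univ.image u, (isCrosscut_blowup_iff hUW).mpr fun i j _ => ?_, ?_⟩
  · rw [inter_image_eq_singleton_of_pairwise_disjoint hUm hu,
      inter_image_eq_empty_of_forall_disjoint (fun i => hUW i j) hu, card_singleton, card_empty]
  · rw [card_univ_image_of_pairwise_disjoint hUm hu, Fintype.card_fin]

lemma exists_isCrosscut_blowup_card_eq_right (hW : ∀ j, (W j).Nonempty)
    (hWm : Pairwise (Disjoint on W)) (hUW : ∀ i j, Disjoint (U i) (W j)) :
    ∃ X, IsCrosscut (blowup T U W) X ∧ #X = t := by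
  choose w hw using hW
  refine ⟨univ.image w, (isCrosscut_blowup_iff hUW).mpr fun i j _ => ?_, ?_⟩
  · rw [inter_image_eq_singleton_of_pairwise_disjoint hWm hw,
      inter_image_eq_empty_of_forall_disjoint (fun j => (hUW i j).symm) hw, card_singleton,
      card_empty]
  · rw [card_univ_image_of_pairwise_disjoint hWm hw, Fintype.card_fin]

lemma min_le_card_of_isCrosscut_blowup (hT : T.Preconnected)
    (hb1 : ∀ i j : Fin s, ¬ T.Adj (inl i) (inl j))
    (hb2 : ∀ i j : Fin t, ¬ T.Adj (inr i) (inr j))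
    (hUm : Pairwise (Disjoint on U)) (hWm : Pairwise (Disjoint on W))
    (hUW : ∀ i j, Disjoint (U i) (W j)) {X : Finset α} (hX : IsCrosscut (blowup T U W) X) :
    min s t ≤ #X := by
  rw [isCrosscut_blowup_iff hUW] at hX
  let marked : Fin s ⊕ Fin t → Prop := fun v => (Sum.elim U W v ∩ X).Nonempty
  have hedge : ∀ i j, T.Adj (inl i) (inr j) → (marked (inl i) ↔ ¬ marked (inr j)) := by
    intro i j hij
    have := hX i j hij
    simp only [marked, elim_inl, elim_inr, ← card_pos]
    omega
  -- `marked` alternates along edges, as `isLeft` does, so their agreement is constant on `T`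
  have hconst : ∀ v w, T.Adj v w → (marked v ↔ v.isLeft) = (marked w ↔ w.isLeft) := by
    rintro (i | j) (i' | j') h
    · exact absurd h (hb1 i i')
    · simp [hedge i j' h]
    · simp [hedge i' j h.symm]
    · exact absurd h (hb2 j j')
  by_cases hleft : ∀ i, (U i ∩ X).Nonempty
  · exact (min_le_left s t).trans (by simpa using card_le_of_forall_inter_nonempty hUm hleft)
  · obtain ⟨i, hi⟩ := not_forall.mp hleft
    have hright : ∀ j, (W j ∩ X).Nonempty := fun j => by
      simpa [marked, hi, ← nonempty_iff_ne_empty] using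
        (hT (inl i) (inr j)).apply_eq_of_forall_adj hconst
    exact (min_le_right s t).trans (by simpa using card_le_of_forall_inter_nonempty hWm hright)

end Blowup

theorem stmt_14_general {α : Type*} [DecidableEq α] (a b s t : ℕ)
    (ha : 1 ≤ a) (hb : 1 ≤ b)
    (T : SimpleGraph (Fin s ⊕ Fin t)) [DecidableRel T.Adj] (hT : T.IsTree)
    (hb1 : ∀ i j : Fin s, ¬ T.Adj (Sum.inl i) (Sum.inl j))
    (hb2 : ∀ i j : Fin t, ¬ T.Adj (Sum.inr i) (Sum.inr j))
    (U : Fin s → Finset α) (W : Fin t → Finset α)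
    (hU : ∀ i, (U i).card = a) (hW : ∀ j, (W j).card = b)
    (hUm : ∀ i i', i ≠ i' → Disjoint (U i) (U i'))
    (hWm : ∀ j j', j ≠ j' → Disjoint (W j) (W j'))
    (hUW : ∀ i j, Disjoint (U i) (W j)) :
    (∃ X : Finset α, ∀ e ∈ blowup T U W, (e ∩ X).card = 1) ∧
      sInf {m | ∃ X : Finset α, (∀ e ∈ blowup T U W, (e ∩ X).card = 1) ∧
        X.card = m} = min s t := by
  have hUm' : Pairwise (Disjoint on U) := fun i i' => hUm i i'
  have hWm' : Pairwise (Disjoint on W) := fun j j' => hWm j j'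
  obtain ⟨XU, hXU, hXUcard⟩ := exists_isCrosscut_blowup_card_eq_left (T := T)
    (fun i => card_pos.mp (hU i ▸ ha)) hUm' hUW
  obtain ⟨XW, hXW, hXWcard⟩ := exists_isCrosscut_blowup_card_eq_right (T := T)
    (fun j => card_pos.mp (hW j ▸ hb)) hWm' hUW
  refine ⟨⟨XU, hXU⟩, IsLeast.csInf_eq ⟨?_, ?_⟩⟩
  · rcases le_total s t with h | h
    · exact ⟨XU, hXU, by rw [hXUcard, min_eq_left h]⟩
    · exact ⟨XW, hXW, by rw [hXWcard, min_eq_right h]⟩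
  · rintro _ ⟨X, hX, rfl⟩
    exact min_le_card_of_isCrosscut_blowup hT.connected.preconnected hb1 hb2 hUm' hWm' hUW hX

/-- The `(a,b)`-blowup of a tree with bipartition classes of sizes `s`, `t` has a
crosscut, and its minimum crosscut size equals `min s t`. -/
theorem stmt_14 {α : Type*} [DecidableEq α] (a b s t : ℕ)
    (ha : 1 ≤ a) (hb : 1 ≤ b) (hs : 1 ≤ s) (ht : 1 ≤ t)
    (T : SimpleGraph (Fin s ⊕ Fin t)) [DecidableRel T.Adj] (hT : T.IsTree)
    (hb1 : ∀ i j : Fin s, ¬ T.Adj (Sum.inl i) (Sum.inl j))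
    (hb2 : ∀ i j : Fin t, ¬ T.Adj (Sum.inr i) (Sum.inr j))
    (U : Fin s → Finset α) (W : Fin t → Finset α)
    (hU : ∀ i, (U i).card = a) (hW : ∀ j, (W j).card = b)
    (hUm : ∀ i i', i ≠ i' → Disjoint (U i) (U i'))
    (hWm : ∀ j j', j ≠ j' → Disjoint (W j) (W j'))
    (hUW : ∀ i j, Disjoint (U i) (W j)) :
    (∃ X : Finset α, ∀ e ∈ blowup T U W, (e ∩ X).card = 1) ∧
      sInf {m | ∃ X : Finset α, (∀ e ∈ blowup T U W, (e ∩ X).card = 1) ∧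
        X.card = m} = min s t :=
  stmt_14_general a b s t ha hb T hT hb1 hb2 U W hU hW hUm hWm hUW
end

section
/- Let r ≥ 3 and let T(r/2, r/2) be the (r/2, r/2)-blowup of a tree T (r even). If H is an n-vertex r-uniform T(r/2,r/2)-free hypergraph and r/2 divides n, then |H| ≤ [ex_2(2n/r, T) / C(2n/r, 2)] · C(n, r). -/
/-- The graph Turán number `ex_2(m, T)`: the maximum number of edges of a
`T`-free graph on `m` vertices. -/
noncomputable def exGraph (m : ℕ) {V : Type*} (T : SimpleGraph V) : ℕ :=
  sSup {k | ∃ G : SimpleGraph (Fin m),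
    (¬ ∃ f : V ↪ Fin m, ∀ u v, T.Adj u v → G.Adj (f u) (f v)) ∧
    G.edgeSet.ncard = k}

/-!
Frankl's averaging argument. Fix a partition of the ground set into `m = 2n/r` labelled blocks
of size `r/2` and move it by a uniformly random permutation `σ`. For a fixed pair of labels, the
union of the two blocks is then a uniformly random `r`-set, so it lies in `H` for exactly a
`|H| / C(n, r)` fraction of the permutations. On the other hand, for each `σ` the pairs of blocks
whose union lies in `H` are the edges of a graph on the `m` labels with no copy of `T` (a copy
would give a copy of the blowup of `T` in `H`), so there are at most `ex_2(m, T)` of them.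
Counting the pairs (permutation, pair of labels) both ways gives the bound.
-/

open Finset MulAction Equiv
open scoped Pointwise Nat

section Orbit

variable {G X : Type*} [Group G] [Fintype G] [MulAction G X] [DecidableEq X]

theorem card_filter_smul_eq_of_mem_orbit {x₀ x : X} (hx : x ∈ orbit G x₀) :
    #{g : G | g • x₀ = x} = #{g : G | g • x₀ = x₀} := by
  obtain ⟨g₁, rfl⟩ := hx
  symm
  refine card_equiv (Equiv.mulLeft g₁) fun g => ?_
  simp [mul_smul]

theorem card_filter_smul_mem_mul_card_orbit (x₀ : X) {S H : Finset X}
    (hS : (S : Set X) = orbit G x₀) (hHS : H ⊆ S) :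
    #{g : G | g • x₀ ∈ H} * #S = #H * Fintype.card G := by
  have hfiber : ∀ t ⊆ S, #{g : G | g • x₀ ∈ t} = #t * #{g : G | g • x₀ = x₀} := fun t ht => by
    rw [← sum_card_fiberwise_eq_card_filter, sum_const_nat]
    exact fun x hx => card_filter_smul_eq_of_mem_orbit (hS ▸ ht hx)
  have hall : #{g : G | g • x₀ ∈ S} = Fintype.card G := by
    rw [filter_true_of_mem fun g _ => by rw [← mem_coe, hS]; exact mem_orbit x₀ g, card_univ]
  rw [← hall, hfiber H hHS, hfiber S subset_rfl]
  ring

end Orbit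

section PermFinset

variable {α : Type*} [DecidableEq α]

theorem mem_orbit_perm_finset_iff {e₀ e : Finset α} :
    e ∈ orbit (Perm α) e₀ ↔ #e = #e₀ := by
  refine ⟨fun ⟨σ, hσ⟩ => hσ ▸ card_smul_finset σ e₀, fun he => ?_⟩
  have := Set.powersetCard.isPretransitive (α := α) (n := #e₀)
  obtain ⟨σ, hσ⟩ := exists_smul_eq (Perm α)
    (⟨e₀, rfl⟩ : Set.powersetCard α #e₀) ⟨e, he⟩
  exact ⟨σ, congrArg Subtype.val hσ⟩

theorem card_filter_perm_smul_mem_mul_choose [Fintype α] (e₀ : Finset α)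
    {H : Finset (Finset α)} (hH : ∀ e ∈ H, #e = #e₀) :
    #{σ : Perm α | σ • e₀ ∈ H} * (Fintype.card α).choose #e₀ = #H * (Fintype.card α)! := by
  have hS : ((powersetCard #e₀ univ : Finset (Finset α)) : Set (Finset α))
      = orbit (Perm α) e₀ := by
    ext e
    simp [mem_orbit_perm_finset_iff]
  have := card_filter_smul_mem_mul_card_orbit e₀ hS fun e he => by simpa using hH e he
  rwa [card_powersetCard, card_univ, Fintype.card_perm] at this

theorem perm_smul_filter_univ [Fintype α] (σ : Perm α) (P : α → Prop) [DecidablePred P] :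
    σ • ({x | P x} : Finset α) = ({x | P (σ⁻¹ x)} : Finset α) := by
  ext x
  rw [← inv_smul_mem_iff]
  simp [Perm.smul_def]

end PermFinset

theorem ncard_edgeSet_le_exGraph {m : ℕ} {V : Type*} {T : SimpleGraph V}
    {G : SimpleGraph (Fin m)} (hG : ¬ ∃ f : V ↪ Fin m, ∀ u v, T.Adj u v → G.Adj (f u) (f v)) :
    G.edgeSet.ncard ≤ exGraph m T := by
  refine le_csSup ⟨Nat.card (Sym2 (Fin m)), ?_⟩ ⟨G, hG, rfl⟩
  rintro k ⟨G', -, rfl⟩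
  exact Set.ncard_le_card _

section Partition

variable {α : Type*} [Fintype α] {m s : ℕ}

theorem card_filter_fst_apply (f : α ≃ Fin m × Fin s) (P : Fin m → Prop) [DecidablePred P] :
    #{x | P (f x).1} = #{i | P i} * s := by
  rw [card_equiv f (t := {y : Fin m × Fin s | P y.1}) (by simp), ← univ_product_univ,
    filter_product_left, card_product, card_univ, Fintype.card_fin]

theorem card_filter_fst_apply_eq (f : α ≃ Fin m × Fin s) (i : Fin m) :
    #{x | (f x).1 = i} = s := by
  rw [card_filter_fst_apply f (· = i), filter_eq', if_pos (mem_univ i), card_singleton, one_mul]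

theorem card_filter_mem_sym2 {z : Sym2 (Fin m)} (hz : ¬ z.IsDiag) : #{i | i ∈ z} = 2 := by
  induction z using Sym2.ind with
  | h a b =>
    rw [Sym2.mk_isDiag_iff] at hz
    rw [← card_pair hz]
    congr 1
    ext
    simp

theorem card_filter_pairs_le_exGraph [DecidableEq α] {V : Type*} (T : SimpleGraph V)
    (H : Finset (Finset α)) (p : α → Fin m) (hp : ∀ i, #{x | p x = i} = s)
    (hfree : ¬ ∃ g : V → Finset α, (∀ v, (g v).card = s) ∧
      (∀ u v, u ≠ v → Disjoint (g u) (g v)) ∧ ∀ u v, T.Adj u v → g u ∪ g v ∈ H) :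
    #{z : Sym2 (Fin m) | ¬ z.IsDiag ∧ ({x | p x ∈ z} : Finset α) ∈ H} ≤ exGraph m T := by
  set G := SimpleGraph.fromEdgeSet {z : Sym2 (Fin m) | ({x | p x ∈ z} : Finset α) ∈ H}
  have hG : ¬ ∃ f : V ↪ Fin m, ∀ u v, T.Adj u v → G.Adj (f u) (f v) := by
    rintro ⟨f, hf⟩
    refine hfree ⟨fun v => {x | p x = f v}, fun v => hp (f v), fun u v huv => ?_,
      fun u v huv => ?_⟩
    · exact disjoint_filter.mpr fun x _ hu hv => huv (f.injective (hu.symm.trans hv))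
    · have hadj := ((SimpleGraph.fromEdgeSet_adj _).mp (hf u v huv)).1
      rw [← filter_or]
      simpa only [Set.mem_ofPred_eq, Sym2.mem_iff] using hadj
  calc #{z : Sym2 (Fin m) | ¬ z.IsDiag ∧ ({x | p x ∈ z} : Finset α) ∈ H} = G.edgeSet.ncard := by
        rw [SimpleGraph.edgeSet_fromEdgeSet, ← Set.ncard_coe_finset]
        congr 1
        ext z
        simp [and_comm]
    _ ≤ exGraph m T := ncard_edgeSet_le_exGraph hG

end Partition

theorem card_mul_choose_two_le_exGraph_mul_choose {α : Type*} [Fintype α] [DecidableEq α]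
    {m s : ℕ} (f₀ : α ≃ Fin m × Fin s) {V : Type*} (T : SimpleGraph V)
    (H : Finset (Finset α)) (hH : ∀ e ∈ H, #e = 2 * s)
    (hfree : ¬ ∃ g : V → Finset α, (∀ v, (g v).card = s) ∧
      (∀ u v, u ≠ v → Disjoint (g u) (g v)) ∧ ∀ u v, T.Adj u v → g u ∪ g v ∈ H) :
    #H * m.choose 2 ≤ exGraph m T * (Fintype.card α).choose (2 * s) := by
  set Z : Finset (Sym2 (Fin m)) := {z | ¬ z.IsDiag}
  set B : Sym2 (Fin m) → Finset α := fun z => {x | (f₀ x).1 ∈ z} with hBdef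
  set inH : Sym2 (Fin m) → Perm α → Prop := fun z σ => σ • B z ∈ H with hinH
  have hZ : #Z = m.choose 2 := by
    rw [← Fintype.card_subtype, Sym2.card_subtype_not_diag, Fintype.card_fin]
  have hB : ∀ z ∈ Z, #(B z) = 2 * s := fun z hz => by
    simp only [hBdef]
    rw [card_filter_fst_apply f₀ (· ∈ z), card_filter_mem_sym2 (mem_filter.mp hz).2]
  have hrandom : ∀ z ∈ Z, #(univ.bipartiteAbove inH z) * (Fintype.card α).choose (2 * s)
      = #H * (Fintype.card α)! := fun z hz => by
    rw [← hB z hz]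
    exact card_filter_perm_smul_mem_mul_choose (B z) fun e he => (hH e he).trans (hB z hz).symm
  have hfreeGraph : ∀ σ : Perm α, #(Z.bipartiteBelow inH σ) ≤ exGraph m T := fun σ => by
    -- the partition moved by `σ` has labels `x ↦ (f₀ (σ⁻¹ x)).1` and pair unions `σ • B z`
    have := card_filter_pairs_le_exGraph T H (fun x => (f₀ (σ⁻¹ x)).1)
      (card_filter_fst_apply_eq (σ⁻¹.trans f₀)) hfree
    simpa only [bipartiteBelow, Z, filter_filter, hinH, hBdef, perm_smul_filter_univ] using this
  refine Nat.le_of_mul_le_mul_right ?_ (Nat.factorial_pos (Fintype.card α))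
  calc #H * m.choose 2 * (Fintype.card α)!
      = (∑ z ∈ Z, #(univ.bipartiteAbove inH z)) * (Fintype.card α).choose (2 * s) := by
        rw [sum_mul, sum_const_nat hrandom, hZ]
        ring
    _ = (∑ σ : Perm α, #(Z.bipartiteBelow inH σ)) * (Fintype.card α).choose (2 * s) := by
        rw [sum_card_bipartiteAbove_eq_sum_card_bipartiteBelow]
    _ ≤ (∑ _σ : Perm α, exGraph m T) * (Fintype.card α).choose (2 * s) := by
        gcongr with σ
        exact hfreeGraph σ
    _ = exGraph m T * (Fintype.card α).choose (2 * s) * (Fintype.card α)! := by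
        rw [sum_const, card_univ, Fintype.card_perm, smul_eq_mul]
        ring

theorem stmt_15_general (r n : ℕ) (hre : 2 ∣ r) (hdvd : r / 2 ∣ n)
    {V : Type*} (T : SimpleGraph V)
    (H : Finset (Finset (Fin n))) (hH : ∀ e ∈ H, e.card = r)
    (hfree : ¬ ∃ g : V → Finset (Fin n), (∀ v, (g v).card = r / 2) ∧
      (∀ u v, u ≠ v → Disjoint (g u) (g v)) ∧
      ∀ u v, T.Adj u v → g u ∪ g v ∈ H) :
    H.card * Nat.choose (2 * n / r) 2 ≤ exGraph (2 * n / r) T * Nat.choose n r := by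
  obtain ⟨s, rfl⟩ := hre
  rw [Nat.mul_div_cancel_left s two_pos] at hdvd hfree
  obtain ⟨m, rfl⟩ : ∃ m, n = m * s := ⟨n / s, (Nat.div_mul_cancel hdvd).symm⟩
  rcases s.eq_zero_or_pos with rfl | hs
  · simp
  rw [mul_left_comm, Nat.mul_div_cancel _ (by positivity)]
  simpa using card_mul_choose_two_le_exGraph_mul_choose finProdFinEquiv.symm T H hH hfree

/-- Frankl's partition argument: if `r` is even, `r/2 ∣ n`, and `H` is an
`n`-vertex `r`-uniform hypergraph with no copy of the `(r/2, r/2)`-blowup of a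
tree `T`, then `|H| ≤ [ex_2(2n/r, T) / C(2n/r, 2)] · C(n, r)`. -/
theorem stmt_15 (r n : ℕ) (hr : 3 ≤ r) (hre : 2 ∣ r) (hdvd : r / 2 ∣ n)
    {V : Type*} [Fintype V] (T : SimpleGraph V) (hT : T.IsTree)
    (H : Finset (Finset (Fin n))) (hH : ∀ e ∈ H, e.card = r)
    (hfree : ¬ ∃ g : V → Finset (Fin n), (∀ v, (g v).card = r / 2) ∧
      (∀ u v, u ≠ v → Disjoint (g u) (g v)) ∧
      ∀ u v, T.Adj u v → g u ∪ g v ∈ H) :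
    H.card * Nat.choose (2 * n / r) 2 ≤ exGraph (2 * n / r) T * Nat.choose n r :=
  stmt_15_general r n hre hdvd T H hH hfree
end

section
/- Let r ≥ 2 and let H be the r-uniform hypergraph on [n] whose edges are e ∪ {i} for i ∈ {1,2}, where G_1 ⊔ G_2 is any partition of all (r−1)-subsets of {3,…,n} and e ranges over G_i. Then |H| = C(n−2, r−1), and H contains no copy of the (r−1,1)-blowup of the path with four edges. -/
/-!
Every edge of `splitGraph G₁ G₂` contains exactly one of `1, 2`, and a set avoiding `1, 2`
extends to an edge by at most one of them, since `G₁` and `G₂` are disjoint. In a copy of the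
blown-up path, if the middle set `A₂` meets `{1, 2}` then `b₁, b₃ ∉ {1, 2}`, so `A₀, A₂, A₄`
would be three disjoint sets all meeting `{1, 2}`; otherwise `{b₁, b₃} = {1, 2}` and `A₂`
extends by both.
-/

/-- The hypergraph built from a partition `G₁ ⊔ G₂` of the `(r-1)`-subsets of
`{3,…,n}`: edges `e ∪ {i}` for `e ∈ Gᵢ`, `i ∈ {1,2}`. -/
def splitGraph (G₁ G₂ : Finset (Finset ℕ)) : Finset (Finset ℕ) :=
  G₁.image (insert 1) ∪ G₂.image (insert 2)

open Finset

section PathBlowup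

variable {α : Type*} {a b x : α} {A B C : Finset α}

lemma eq_of_insert_eq_insert [DecidableEq α] (hA : a ∉ A) (hB : a ∉ B)
    (h : insert a A = insert a B) : A = B := by
  rw [← erase_insert hA, h, erase_insert hB]

lemma not_mem_or_mem_of_disjoint (hA : a ∈ A ∨ b ∈ A) (hB : a ∈ B ∨ b ∈ B) (hAB : Disjoint A B)
    (hAC : Disjoint A C) (hBC : Disjoint B C) : ¬(a ∈ C ∨ b ∈ C) := by
  have hAB := disjoint_left.mp hAB
  have hAC := disjoint_left.mp hAC
  have hBC := disjoint_left.mp hBC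
  tauto

variable [DecidableEq α] {H : Finset (Finset α)}

lemma mem_or_mem_of_insert_mem (hH : ∀ E ∈ H, (a ∈ E ↔ b ∉ E)) (h : insert x A ∈ H)
    (hxa : x ≠ a) (hxb : x ≠ b) : a ∈ A ∨ b ∈ A := by
  have := hH _ h
  simp only [mem_insert, hxa.symm, hxb.symm, false_or] at this
  tauto

lemma eq_or_eq_iff_of_insert_mem (hH : ∀ E ∈ H, (a ∈ E ↔ b ∉ E)) (h : insert x A ∈ H)
    (hx : x ∉ A) : (x = a ∨ x = b) ↔ (a ∉ A ∧ b ∉ A) := by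
  have := hH _ h
  simp only [mem_insert] at this
  constructor
  · rintro (rfl | rfl) <;> tauto
  · tauto

theorem not_path_blowup_of_mem_iff_notMem (hH : ∀ E ∈ H, (a ∈ E ↔ b ∉ E))
    (hlink : ∀ X, a ∉ X → b ∉ X → insert a X ∈ H → insert b X ∉ H)
    {A₀ A₂ A₄ : Finset α} {b₁ b₃ : α}
    (h₀₂ : Disjoint A₀ A₂) (h₀₄ : Disjoint A₀ A₄) (h₂₄ : Disjoint A₂ A₄) (hb : b₁ ≠ b₃)
    (hb₁ : b₁ ∉ A₂) (hb₃ : b₃ ∉ A₂)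
    (e₁ : insert b₁ A₀ ∈ H) (e₂ : insert b₁ A₂ ∈ H) (e₃ : insert b₃ A₂ ∈ H)
    (e₄ : insert b₃ A₄ ∈ H) : False := by
  have hb₁ := eq_or_eq_iff_of_insert_mem hH e₂ hb₁
  have hb₃ := eq_or_eq_iff_of_insert_mem hH e₃ hb₃
  by_cases hA₂ : a ∈ A₂ ∨ b ∈ A₂
  · have hA₀ := mem_or_mem_of_insert_mem hH e₁ (by tauto) (by tauto)
    have hA₄ := mem_or_mem_of_insert_mem hH e₄ (by tauto) (by tauto)
    exact not_mem_or_mem_of_disjoint hA₀ hA₄ h₀₄ h₀₂ h₂₄.symm hA₂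
  · obtain ⟨haA₂, hbA₂⟩ := not_or.mp hA₂
    rcases hb₁.mpr ⟨haA₂, hbA₂⟩ with rfl | rfl <;> rcases hb₃.mpr ⟨haA₂, hbA₂⟩ with rfl | rfl
    · exact hb rfl
    · exact hlink A₂ haA₂ hbA₂ e₂ e₃
    · exact hlink A₂ haA₂ hbA₂ e₃ e₂
    · exact hb rfl

end PathBlowup

section SplitGraph

variable {G₁ G₂ : Finset (Finset ℕ)}

lemma one_mem_iff_two_notMem_of_mem_splitGraph (hG : ∀ e ∈ G₁ ∪ G₂, 1 ∉ e ∧ 2 ∉ e)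
    {E : Finset ℕ} (hE : E ∈ splitGraph G₁ G₂) : 1 ∈ E ↔ 2 ∉ E := by
  simp only [splitGraph, mem_union, mem_image] at hE
  rcases hE with ⟨e, he, rfl⟩ | ⟨e, he, rfl⟩
  · simpa using (hG e (mem_union_left _ he)).2
  · simpa using (hG e (mem_union_right _ he)).1

lemma mem_left_of_insert_one_mem_splitGraph (hG : ∀ e ∈ G₁ ∪ G₂, 1 ∉ e ∧ 2 ∉ e)
    {X : Finset ℕ} (h1 : 1 ∉ X) (h2 : 2 ∉ X) (hX : insert 1 X ∈ splitGraph G₁ G₂) : X ∈ G₁ := by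
  simp only [splitGraph, mem_union, mem_image] at hX
  rcases hX with ⟨e, he, heq⟩ | ⟨e, -, heq⟩
  · rwa [eq_of_insert_eq_insert h1 (hG e (mem_union_left _ he)).1 heq.symm]
  · exact absurd (heq ▸ mem_insert_self 2 e) (by simp [h2])

lemma mem_right_of_insert_two_mem_splitGraph (hG : ∀ e ∈ G₁ ∪ G₂, 1 ∉ e ∧ 2 ∉ e)
    {X : Finset ℕ} (h1 : 1 ∉ X) (h2 : 2 ∉ X) (hX : insert 2 X ∈ splitGraph G₁ G₂) : X ∈ G₂ := by
  simp only [splitGraph, mem_union, mem_image] at hX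
  rcases hX with ⟨e, -, heq⟩ | ⟨e, he, heq⟩
  · exact absurd (heq ▸ mem_insert_self 1 e) (by simp [h1])
  · rwa [eq_of_insert_eq_insert h2 (hG e (mem_union_right _ he)).2 heq.symm]

lemma card_splitGraph (hG : ∀ e ∈ G₁ ∪ G₂, 1 ∉ e ∧ 2 ∉ e) (hdisj : Disjoint G₁ G₂) :
    (splitGraph G₁ G₂).card = (G₁ ∪ G₂).card := by
  have hG₁ e (he : e ∈ G₁) := hG e (mem_union_left _ he)
  have hG₂ e (he : e ∈ G₂) := hG e (mem_union_right _ he)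
  have himage : Disjoint (G₁.image (insert 1)) (G₂.image (insert 2)) := by
    simp only [disjoint_left, mem_image, not_exists, not_and]
    rintro _ ⟨e, he, rfl⟩ f hf hfe
    have h1 : 1 ∈ insert 2 f := hfe ▸ mem_insert_self 1 e
    simp [(hG₂ f hf).1] at h1
  rw [splitGraph, card_union_of_disjoint himage, card_union_of_disjoint hdisj,
    card_image_of_injOn, card_image_of_injOn]
  · exact fun e he f hf hef => eq_of_insert_eq_insert (hG₂ e he).2 (hG₂ f hf).2 hef
  · exact fun e he f hf hef => eq_of_insert_eq_insert (hG₁ e he).1 (hG₁ f hf).1 hef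

end SplitGraph

theorem stmt_18_general (n r : ℕ)
    (G₁ G₂ : Finset (Finset ℕ))
    (hpart : G₁ ∪ G₂ = (Finset.Icc 3 n).powersetCard (r - 1))
    (hdisj : Disjoint G₁ G₂) :
    (splitGraph G₁ G₂).card = Nat.choose (n - 2) (r - 1) ∧
    ¬ ∃ (A₀ A₂ A₄ : Finset ℕ) (b₁ b₃ : ℕ),
      A₀.card = r - 1 ∧ A₂.card = r - 1 ∧ A₄.card = r - 1 ∧
      Disjoint A₀ A₂ ∧ Disjoint A₀ A₄ ∧ Disjoint A₂ A₄ ∧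
      b₁ ≠ b₃ ∧ b₁ ∉ A₀ ∪ A₂ ∪ A₄ ∧ b₃ ∉ A₀ ∪ A₂ ∪ A₄ ∧
      insert b₁ A₀ ∈ splitGraph G₁ G₂ ∧ insert b₁ A₂ ∈ splitGraph G₁ G₂ ∧
      insert b₃ A₂ ∈ splitGraph G₁ G₂ ∧ insert b₃ A₄ ∈ splitGraph G₁ G₂ := by
  have hG : ∀ e ∈ G₁ ∪ G₂, 1 ∉ e ∧ 2 ∉ e := fun e he => by
    have hsub := (mem_powersetCard.mp (hpart ▸ he)).1
    exact ⟨fun h => by simpa using hsub h, fun h => by simpa using hsub h⟩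
  refine ⟨?_, ?_⟩
  · rw [card_splitGraph hG hdisj, hpart, card_powersetCard, Nat.card_Icc]
    congr 1
  · rintro ⟨A₀, A₂, A₄, b₁, b₃, -, -, -, h₀₂, h₀₄, h₂₄, hb, hb₁, hb₃, e₁, e₂, e₃, e₄⟩
    simp only [mem_union, not_or] at hb₁ hb₃
    exact not_path_blowup_of_mem_iff_notMem
      (fun E hE => one_mem_iff_two_notMem_of_mem_splitGraph hG hE)
      (fun X h1 h2 hX₁ hX₂ => disjoint_left.mp hdisj
        (mem_left_of_insert_one_mem_splitGraph hG h1 h2 hX₁)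
        (mem_right_of_insert_two_mem_splitGraph hG h1 h2 hX₂))
      h₀₂ h₀₄ h₂₄ hb hb₁.1.2 hb₃.1.2 e₁ e₂ e₃ e₄

/-- The no-stability example: `H` has `C(n-2, r-1)` edges and contains no copy
of the `(r-1,1)`-blowup of the path with four edges. -/
theorem stmt_18 (n r : ℕ) (hr : 2 ≤ r) (hn : 2 ≤ n)
    (G₁ G₂ : Finset (Finset ℕ))
    (hpart : G₁ ∪ G₂ = (Finset.Icc 3 n).powersetCard (r - 1))
    (hdisj : Disjoint G₁ G₂) :
    (splitGraph G₁ G₂).card = Nat.choose (n - 2) (r - 1) ∧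
    ¬ ∃ (A₀ A₂ A₄ : Finset ℕ) (b₁ b₃ : ℕ),
      A₀.card = r - 1 ∧ A₂.card = r - 1 ∧ A₄.card = r - 1 ∧
      Disjoint A₀ A₂ ∧ Disjoint A₀ A₄ ∧ Disjoint A₂ A₄ ∧
      b₁ ≠ b₃ ∧ b₁ ∉ A₀ ∪ A₂ ∪ A₄ ∧ b₃ ∉ A₀ ∪ A₂ ∪ A₄ ∧
      insert b₁ A₀ ∈ splitGraph G₁ G₂ ∧ insert b₁ A₂ ∈ splitGraph G₁ G₂ ∧
      insert b₃ A₂ ∈ splitGraph G₁ G₂ ∧ insert b₃ A₄ ∈ splitGraph G₁ G₂ :=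
  stmt_18_general n r G₁ G₂ hpart hdisj
end
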